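/- arXiv:1906.11866 — 11 statements merged into one kernel-verified Lean document; each statement's English description precedes it below -/
import Mathlib

section
/- For every positive integer m, there exists a sequence of m distinct real numbers containing no monotone subsequence whose index set is a 3-term arithmetic progression; that is, there are no indices i < j < k with k - j = j - i such that (a_i, a_j, a_k) is monotone. -/
/-- `a i, a j, a k` is a monotone triple. -/
def MonoTriple (a : ℕ → ℝ) (i j k : ℕ) : Prop :=
  (a i < a j ∧ a j < a k) ∨ (a k < a j ∧ a j < a i)

/-- Binary digits of `n` read as a base-3 fraction. -/
noncomputable def aSeq (n : ℕ) : ℝ :=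
  if h : n = 0 then 0 else (n % 2 : ℕ) + aSeq (n / 2) / 3
termination_by n
decreasing_by exact Nat.div_lt_self (Nat.pos_of_ne_zero h) (by norm_num)

lemma aSeq_eq (n : ℕ) : aSeq n = (n % 2 : ℕ) + aSeq (n / 2) / 3 := by
  rw [aSeq]
  rcases eq_or_ne n 0 with rfl | h
  · simp [aSeq]
  · simp [h]

lemma aSeq_nonneg (n : ℕ) : 0 ≤ aSeq n := by
  induction n using Nat.strong_induction_on with
  | _ n ih =>
    rcases eq_or_ne n 0 with rfl | h
    · rw [aSeq]; simp
    · rw [aSeq_eq]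
      have := ih (n / 2) (Nat.div_lt_self (Nat.pos_of_ne_zero h) (by norm_num))
      positivity

lemma aSeq_lt (n : ℕ) : aSeq n < 3 / 2 := by
  induction n using Nat.strong_induction_on with
  | _ n ih =>
    rcases eq_or_ne n 0 with rfl | h
    · rw [aSeq]; norm_num
    · rw [aSeq_eq]
      have h2 := ih (n / 2) (Nat.div_lt_self (Nat.pos_of_ne_zero h) (by norm_num))
      have : ((n % 2 : ℕ) : ℝ) ≤ 1 := by
        have := Nat.mod_lt n (show 0 < 2 by norm_num)
        exact_mod_cast Nat.lt_succ_iff.mp this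
      linarith

lemma cmp_diff {n m : ℕ} (hn : n % 2 = 0) (hm : m % 2 = 1) : aSeq n < aSeq m := by
  rw [aSeq_eq n, aSeq_eq m, hn, hm]
  have h1 := aSeq_lt (n / 2)
  have h2 := aSeq_nonneg (m / 2)
  push_cast
  linarith

lemma cmp_same {n m : ℕ} (h : n % 2 = m % 2) :
    aSeq n < aSeq m ↔ aSeq (n / 2) < aSeq (m / 2) := by
  rw [aSeq_eq n, aSeq_eq m, h]
  constructor <;> intro hlt <;> linarith

lemma aSeq_zero : aSeq 0 = 0 := by rw [aSeq]; simp

lemma aSeq_pos {n : ℕ} (h : n ≠ 0) : 0 < aSeq n := by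
  induction n using Nat.strong_induction_on with
  | _ n ih =>
    rw [aSeq_eq]
    rcases Nat.mod_two_eq_zero_or_one n with h0 | h1
    · have hn2 : n / 2 ≠ 0 := by omega
      have := ih (n / 2) (Nat.div_lt_self (Nat.pos_of_ne_zero h) (by norm_num)) hn2
      rw [h0]; push_cast; linarith
    · have := aSeq_nonneg (n / 2)
      rw [h1]; push_cast; linarith

lemma aSeq_injective : Function.Injective aSeq := by
  intro n m h
  induction n using Nat.strong_induction_on generalizing m with
  | _ n ih =>
    rcases eq_or_ne n 0 with rfl | hn0
    · by_contra hm0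
      have := aSeq_pos (Ne.symm hm0)
      rw [← h, aSeq_zero] at this
      exact lt_irrefl _ this
    rcases eq_or_ne m 0 with rfl | hm0
    · exfalso
      have hp := aSeq_pos hn0
      rw [h, aSeq_zero] at hp
      exact lt_irrefl _ hp
    have hpar : n % 2 = m % 2 := by
      by_contra hne
      rcases Nat.mod_two_eq_zero_or_one n with h0 | h1 <;>
        rcases Nat.mod_two_eq_zero_or_one m with g0 | g1
      · exact hne (h0.trans g0.symm)
      · exact absurd h (ne_of_lt (cmp_diff h0 g1))
      · exact absurd h.symm (ne_of_lt (cmp_diff g0 h1))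
      · exact hne (h1.trans g1.symm)
    have hlt : n / 2 < n := Nat.div_lt_self (Nat.pos_of_ne_zero hn0) (by norm_num)
    have hhalf : aSeq (n / 2) = aSeq (m / 2) := by
      rw [aSeq_eq n, aSeq_eq m, hpar] at h
      linarith
    have := ih (n / 2) hlt hhalf
    omega

lemma noMono : ∀ k i j : ℕ, i < j → j < k → i + k = 2 * j → ¬ MonoTriple aSeq i j k := by
  intro k
  induction k using Nat.strong_induction_on with
  | _ k ih =>
    intro i j hij hjk hap hmono
    have hik : i % 2 = k % 2 := by omega
    rcases Nat.decEq (j % 2) (i % 2) with hne | heq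
    · -- j has different parity from i and k
      have hjk2 : j % 2 ≠ k % 2 := by omega
      rcases Nat.mod_two_eq_zero_or_one j with hj0 | hj1
      · have hi1 : i % 2 = 1 := by omega
        have hk1 : k % 2 = 1 := by omega
        have h1 := cmp_diff hj0 hi1
        have h2 := cmp_diff hj0 hk1
        rcases hmono with ⟨ha, hb⟩ | ⟨ha, hb⟩ <;> linarith
      · have hi0 : i % 2 = 0 := by omega
        have hk0 : k % 2 = 0 := by omega
        have h1 := cmp_diff hi0 hj1
        have h2 := cmp_diff hk0 hj1
        rcases hmono with ⟨ha, hb⟩ | ⟨ha, hb⟩ <;> linarith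
    · -- all same parity: recurse
      have h1 : i / 2 + k / 2 = 2 * (j / 2) := by omega
      have h2 : i / 2 < j / 2 := by omega
      have h3 : j / 2 < k / 2 := by omega
      have hk2 : k / 2 < k := by omega
      apply ih (k / 2) hk2 (i / 2) (j / 2) h2 h3 h1
      have e1 := cmp_same (show i % 2 = j % 2 by omega)
      have e2 := cmp_same (show j % 2 = k % 2 by omega)
      have e3 := cmp_same (show k % 2 = j % 2 by omega)
      have e4 := cmp_same (show j % 2 = i % 2 by omega)
      rcases hmono with ⟨ha, hb⟩ | ⟨ha, hb⟩
      · exact Or.inl ⟨e1.mp ha, e2.mp hb⟩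
      · exact Or.inr ⟨e3.mp ha, e4.mp hb⟩

/-- For every positive integer `m` there is a sequence of `m` distinct reals with no
monotone subsequence indexed by a 3-term arithmetic progression. -/
theorem stmt1 (m : ℕ) (hm : 0 < m) :
    ∃ a : ℕ → ℝ, Set.InjOn a (Set.Icc 1 m) ∧
      ∀ i j k : ℕ, 1 ≤ i → i < j → j < k → k ≤ m → j - i = k - j →
        ¬ MonoTriple a i j k := by
  refine ⟨aSeq, aSeq_injective.injOn, ?_⟩
  intro i j k _ hij hjk _ hap
  exact noMono k i j hij hjk (by omega)
end

section
/- If (a₁,…,a_m) is a sequence of distinct real numbers containing no monotone subsequence indexed by a 3-term arithmetic progression, and M > 2·max_i |a_i|, then the length-2m sequence (a₁, a₁+M, a₂, a₂+M, …, a_m, a_m+M) also contains no monotone subsequence indexed by a 3-term arithmetic progression. -/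
/-- If `a 1, …, a m` are distinct reals with no monotone subsequence indexed by a 3-AP and
`M > 2 max |a i|`, then the sequence `b = (a 1, a 1 + M, a 2, a 2 + M, …, a m, a m + M)`
also has no monotone subsequence indexed by a 3-AP. -/
theorem stmt2 (m : ℕ) (hm : 0 < m) (a b : ℕ → ℝ) (M : ℝ)
    (ha : Set.InjOn a (Set.Icc 1 m))
    (hM : ∀ i ∈ Set.Icc 1 m, 2 * |a i| < M)
    (hnoAP : ∀ i j k : ℕ, 1 ≤ i → i < j → j < k → k ≤ m → j - i = k - j →
      ¬ MonoTriple a i j k)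
    (hb : ∀ t, 1 ≤ t → t ≤ m → b (2 * t - 1) = a t ∧ b (2 * t) = a t + M) :
    ∀ i j k : ℕ, 1 ≤ i → i < j → j < k → k ≤ 2 * m → j - i = k - j →
      ¬ MonoTriple b i j k := by
  intro i j k hi1 hij hjk hk2m hap hmono
  have key : ∀ x y : ℕ, 1 ≤ x → x ≤ m → 1 ≤ y → y ≤ m → a x < a y + M := by
    intro x y hx1 hx2 hy1 hy2
    have h1 := hM x ⟨hx1, hx2⟩
    have h2 := hM y ⟨hy1, hy2⟩
    have h3 := le_abs_self (a x)
    have h4 := neg_abs_le (a y)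
    linarith
  have hik : i + k = 2 * j := by omega
  rcases Nat.even_or_odd i with ⟨s, hs⟩ | ⟨s, hs⟩
  · -- i = s + s, even
    obtain ⟨u, hu⟩ : ∃ u, k = 2 * u := ⟨j - s, by omega⟩
    have hs1 : 1 ≤ s := by omega
    have hsm : s ≤ m := by omega
    have hu1 : 1 ≤ u := by omega
    have hum : u ≤ m := by omega
    have hbi : b i = a s + M := by
      rw [show i = 2 * s by omega]; exact (hb s hs1 hsm).2
    have hbk : b k = a u + M := by
      rw [hu]; exact (hb u hu1 hum).2
    rcases Nat.even_or_odd j with ⟨t, ht⟩ | ⟨t, ht⟩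
    · -- j = t + t
      have ht1 : 1 ≤ t := by omega
      have htm : t ≤ m := by omega
      have hbj : b j = a t + M := by
        rw [show j = 2 * t by omega]; exact (hb t ht1 htm).2
      apply hnoAP s t u hs1 (by omega) (by omega) hum (by omega)
      unfold MonoTriple at hmono ⊢
      rw [hbi, hbj, hbk] at hmono
      rcases hmono with ⟨h1, h2⟩ | ⟨h1, h2⟩
      · exact Or.inl ⟨by linarith, by linarith⟩
      · exact Or.inr ⟨by linarith, by linarith⟩
    · -- j = 2 * t + 1
      have ht1 : 1 ≤ t + 1 := by omega
      have htm : t + 1 ≤ m := by omega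
      have hbj : b j = a (t + 1) := by
        rw [show j = 2 * (t + 1) - 1 by omega]; exact (hb (t + 1) ht1 htm).1
      unfold MonoTriple at hmono
      rw [hbi, hbj, hbk] at hmono
      have hk1 := key (t + 1) s ht1 htm hs1 hsm
      have hk2 := key (t + 1) u ht1 htm hu1 hum
      rcases hmono with ⟨h1, h2⟩ | ⟨h1, h2⟩ <;> linarith
  · -- i = 2 * s + 1, odd
    obtain ⟨u, hu⟩ : ∃ u, k = 2 * u + 1 := ⟨j - s - 1, by omega⟩
    have hs1 : 1 ≤ s + 1 := by omega
    have hsm : s + 1 ≤ m := by omega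
    have hu1 : 1 ≤ u + 1 := by omega
    have hum : u + 1 ≤ m := by omega
    have hbi : b i = a (s + 1) := by
      rw [show i = 2 * (s + 1) - 1 by omega]; exact (hb (s + 1) hs1 hsm).1
    have hbk : b k = a (u + 1) := by
      rw [show k = 2 * (u + 1) - 1 by omega]; exact (hb (u + 1) hu1 hum).1
    rcases Nat.even_or_odd j with ⟨t, ht⟩ | ⟨t, ht⟩
    · -- j even
      have ht1 : 1 ≤ t := by omega
      have htm : t ≤ m := by omega
      have hbj : b j = a t + M := by
        rw [show j = 2 * t by omega]; exact (hb t ht1 htm).2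
      unfold MonoTriple at hmono
      rw [hbi, hbj, hbk] at hmono
      have hk1 := key (s + 1) t hs1 hsm ht1 htm
      have hk2 := key (u + 1) t hu1 hum ht1 htm
      rcases hmono with ⟨h1, h2⟩ | ⟨h1, h2⟩ <;> linarith
    · -- j = 2 * t + 1
      have ht1 : 1 ≤ t + 1 := by omega
      have htm : t + 1 ≤ m := by omega
      have hbj : b j = a (t + 1) := by
        rw [show j = 2 * (t + 1) - 1 by omega]; exact (hb (t + 1) ht1 htm).1
      apply hnoAP (s + 1) (t + 1) (u + 1) hs1 (by omega) (by omega) hum (by omega)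
      unfold MonoTriple at hmono ⊢
      rw [hbi, hbj, hbk] at hmono
      exact hmono
end

section
/- Let n ≥ 3 and let ≺ be a uniform linear ordering on {0,1,…,k-1}^n (meaning: for every d ≤ n, all restrictions of ≺ to d-subcubes, transported to {0,…,k-1}^d via the canonical bijections, yield the same linear ordering of {0,…,k-1}^d). Let < denote the induced ordering on the alphabet, and suppose a < b. Then the restriction of ≺ to {a,b}^n is the lexicographic ordering with respect to the restriction of < to {a,b}. -/
/-- Substitution: replace each wildcard `*ⱼ` in the parameter word `p` by `w j`. -/
def subst {k d n : ℕ} (p : Fin n → Sum (Fin k) (Fin d)) (w : Fin d → Fin k) :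
    Fin n → Fin k :=
  fun i => Sum.elim id w (p i)

/-- `p` is a `d`-parameter word: every wildcard occurs at least once. -/
def IsPWord {k d n : ℕ} (p : Fin n → Sum (Fin k) (Fin d)) : Prop :=
  ∀ j : Fin d, ∃ i, p i = Sum.inr j

/-- `p` is canonical: the first occurrence of `*ⱼ₁` precedes the first occurrence of `*ⱼ₂`
whenever `j₁ < j₂` (equivalently, every occurrence of `*ⱼ₂` is preceded by some occurrence
of `*ⱼ₁`). -/
def Canonical {k d n : ℕ} (p : Fin n → Sum (Fin k) (Fin d)) : Prop :=
  ∀ j₁ j₂ : Fin d, j₁ < j₂ → ∀ i₂ : Fin n, p i₂ = Sum.inr j₂ →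
    ∃ i₁ : Fin n, i₁ < i₂ ∧ p i₁ = Sum.inr j₁

/-- Lexicographic order on words induced by an order `lt` on letters. -/
def LexLT {k d : ℕ} (lt : Fin k → Fin k → Prop) (w w' : Fin d → Fin k) : Prop :=
  ∃ i : Fin d, lt (w i) (w' i) ∧ ∀ j : Fin d, j < i → w j = w' j

/-- A linear ordering `r` on `[k]^n` is uniform if its restrictions to all `d`-subcubes,
transported via canonical parameter words, agree. -/
def Uniform {k n : ℕ} (r : (Fin n → Fin k) → (Fin n → Fin k) → Prop) : Prop :=
  ∀ (d : ℕ) (p q : Fin n → Sum (Fin k) (Fin d)),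
    IsPWord p → Canonical p → IsPWord q → Canonical q →
    ∀ w w' : Fin d → Fin k, (r (subst p w) (subst p w') ↔ r (subst q w) (subst q w'))

lemma canon1 {k n : ℕ} (p : Fin n → Sum (Fin k) (Fin 1)) : Canonical p := by
  intro j₁ j₂ h i₂ _
  have h1 := j₁.isLt; have h2 := j₂.isLt
  rw [Fin.lt_def] at h; omega

def uab {k : ℕ} (a b : Fin k) : Fin 2 → Fin k := fun v => if v.val = 0 then a else b
def uba {k : ℕ} (a b : Fin k) : Fin 2 → Fin k := fun v => if v.val = 0 then b else a

def pw3 {k n : ℕ} (c0 c1 c2 crest : Sum (Fin k) (Fin 2)) : Fin n → Sum (Fin k) (Fin 2) :=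
  fun j => if j.val = 0 then c0 else if j.val = 1 then c1 else if j.val = 2 then c2 else crest

def word3 {k n : ℕ} (x y z rest : Fin k) : Fin n → Fin k :=
  fun j => if j.val = 0 then x else if j.val = 1 then y else if j.val = 2 then z else rest

lemma fin2_lt {j₁ j₂ : Fin 2} (h : j₁ < j₂) : j₁ = 0 ∧ j₂ = 1 := by
  have h1 := j₁.isLt; have h2 := j₂.isLt
  rw [Fin.lt_def] at h
  constructor <;> (apply Fin.ext; simp; omega)

lemma pw3_canonical {k n : ℕ} (c0 c1 c2 crest : Sum (Fin k) (Fin 2))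
    (i₀ : Fin n) (h₀ : pw3 c0 c1 c2 crest i₀ = Sum.inr 0)
    (hno1 : ∀ i : Fin n, pw3 c0 c1 c2 crest i = Sum.inr 1 → i₀ < i) :
    Canonical (pw3 c0 c1 c2 crest : Fin n → _) := by
  intro j₁ j₂ h i₂ h₂
  obtain ⟨rfl, rfl⟩ := fin2_lt h
  exact ⟨i₀, hno1 i₂ h₂, h₀⟩

section
variable {k n : ℕ} (a b : Fin k)

-- the three standard 2-parameter words of length n
def qA : Fin n → Sum (Fin k) (Fin 2) := pw3 (Sum.inr 0) (Sum.inr 1) (Sum.inl a) (Sum.inl a)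
def qB : Fin n → Sum (Fin k) (Fin 2) := pw3 (Sum.inr 0) (Sum.inr 1) (Sum.inr 0) (Sum.inl a)
def qC (b : Fin k) : Fin n → Sum (Fin k) (Fin 2) :=
  pw3 (Sum.inl b) (Sum.inr 0) (Sum.inr 1) (Sum.inl a)

lemma qA_pword (hn : 3 ≤ n) : IsPWord (qA a : Fin n → _) := by
  intro j
  rcases (by decide : ∀ j : Fin 2, j = 0 ∨ j = 1) j with rfl | rfl
  · exact ⟨⟨0, by omega⟩, rfl⟩
  · exact ⟨⟨1, by omega⟩, rfl⟩

lemma qB_pword (hn : 3 ≤ n) : IsPWord (qB a : Fin n → _) := by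
  intro j
  rcases (by decide : ∀ j : Fin 2, j = 0 ∨ j = 1) j with rfl | rfl
  · exact ⟨⟨0, by omega⟩, rfl⟩
  · exact ⟨⟨1, by omega⟩, rfl⟩

lemma qC_pword (hn : 3 ≤ n) : IsPWord (qC a b : Fin n → _) := by
  intro j
  rcases (by decide : ∀ j : Fin 2, j = 0 ∨ j = 1) j with rfl | rfl
  · exact ⟨⟨1, by omega⟩, rfl⟩
  · exact ⟨⟨2, by omega⟩, rfl⟩

lemma qA_canon (hn : 3 ≤ n) : Canonical (qA a : Fin n → _) := by
  apply pw3_canonical _ _ _ _ ⟨0, by omega⟩ rfl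
  intro i hi
  unfold pw3 at hi
  split_ifs at hi with h0 h1 h2 <;> simp_all [Fin.lt_def]

lemma qB_canon (hn : 3 ≤ n) : Canonical (qB a : Fin n → _) := by
  apply pw3_canonical _ _ _ _ ⟨0, by omega⟩ rfl
  intro i hi
  unfold pw3 at hi
  split_ifs at hi with h0 h1 h2 <;> simp_all [Fin.lt_def]

lemma qC_canon (hn : 3 ≤ n) : Canonical (qC a b : Fin n → _) := by
  apply pw3_canonical _ _ _ _ ⟨1, by omega⟩ rfl
  intro i hi
  unfold pw3 at hi
  split_ifs at hi with h0 h1 h2 <;> simp_all [Fin.lt_def]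

lemma subst_qA_uab : subst (qA a : Fin n → _) (uab a b) = word3 a b a a := by
  funext j; unfold subst qA pw3 word3
  split_ifs <;> rfl

lemma subst_qA_uba : subst (qA a : Fin n → _) (uba a b) = word3 b a a a := by
  funext j; unfold subst qA pw3 word3
  split_ifs <;> rfl

lemma subst_qB_uab : subst (qB a : Fin n → _) (uab a b) = word3 a b a a := by
  funext j; unfold subst qB pw3 word3
  split_ifs <;> rfl

lemma subst_qB_uba : subst (qB a : Fin n → _) (uba a b) = word3 b a b a := by
  funext j; unfold subst qB pw3 word3
  split_ifs <;> rfl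

lemma subst_qC_uab : subst (qC a b : Fin n → _) (uab a b) = word3 b a b a := by
  funext j; unfold subst qC pw3 word3
  split_ifs <;> rfl

lemma subst_qC_uba : subst (qC a b : Fin n → _) (uba a b) = word3 b b a a := by
  funext j; unfold subst qC pw3 word3
  split_ifs <;> rfl

-- the 1-parameter word picking out position 0, with b at position 1 and a elsewhere
def p2 (b : Fin k) : Fin n → Sum (Fin k) (Fin 1) :=
  fun j => if j.val = 0 then Sum.inr 0 else if j.val = 1 then Sum.inl b else Sum.inl a

lemma p2_pword (hn : 3 ≤ n) : IsPWord (p2 a b : Fin n → _) := by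
  intro j
  have : j = 0 := Subsingleton.elim _ _
  subst this
  exact ⟨⟨0, by omega⟩, rfl⟩

lemma subst_p2_a : subst (p2 a b : Fin n → _) (fun _ => a) = word3 a b a a := by
  funext j; unfold subst p2 word3
  split_ifs <;> rfl

lemma subst_p2_b : subst (p2 a b : Fin n → _) (fun _ => b) = word3 b b a a := by
  funext j; unfold subst p2 word3
  split_ifs <;> rfl

/-- Key lemma: `subst p (a,b) ≺ subst p (b,a)` for any canonical 2-parameter word. -/
lemma ab_lt_ba (hn : 3 ≤ n)
    (r : (Fin n → Fin k) → (Fin n → Fin k) → Prop)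
    (hr : IsStrictTotalOrder (Fin n → Fin k) r) (hu : Uniform r)
    (hab : ∀ p : Fin n → Sum (Fin k) (Fin 1), IsPWord p → Canonical p →
      r (subst p (fun _ => a)) (subst p (fun _ => b)))
    (hne : a ≠ b)
    (p : Fin n → Sum (Fin k) (Fin 2)) (hp : IsPWord p) (hcp : Canonical p) :
    r (subst p (uab a b)) (subst p (uba a b)) := by
  haveI := hr
  rw [hu 2 p (qA a) hp hcp (qA_pword a hn) (qA_canon a hn) (uab a b) (uba a b)]
  rcases trichotomous_of r (subst (qA a : Fin n → _) (uab a b)) (subst (qA a) (uba a b))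
    with h | h | h
  · exact h
  · exfalso
    rw [subst_qA_uab, subst_qA_uba] at h
    have := congrFun h ⟨0, by omega⟩
    unfold word3 at this
    simp at this
    exact hne this
  · exfalso
    have R1 : r (subst (qB a : Fin n → _) (uba a b)) (subst (qB a) (uab a b)) :=
      (hu 2 (qA a) (qB a) (qA_pword a hn) (qA_canon a hn) (qB_pword a hn) (qB_canon a hn)
        (uba a b) (uab a b)).mp h
    have R3 : r (subst (qC a b : Fin n → _) (uba a b)) (subst (qC a b) (uab a b)) :=
      (hu 2 (qA a) (qC a b) (qA_pword a hn) (qA_canon a hn) (qC_pword a b hn) (qC_canon a b hn)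
        (uba a b) (uab a b)).mp h
    have Hab : r (subst (p2 a b : Fin n → _) (fun _ => a)) (subst (p2 a b) (fun _ => b)) :=
      hab (p2 a b) (p2_pword a b hn) (canon1 _)
    rw [subst_qB_uba, subst_qB_uab] at R1
    rw [subst_qC_uba, subst_qC_uab] at R3
    rw [subst_p2_a, subst_p2_b] at Hab
    -- R1 : r (word3 b a b a) (word3 a b a a)
    -- Hab : r (word3 a b a a) (word3 b b a a)
    -- R3 : r (word3 b b a a) (word3 b a b a)
    exact irrefl_of r _ (trans_of r (trans_of r R1 Hab) R3)

end

section
variable {k n : ℕ}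

/-- Main comparison lemma: if `w, w' ∈ {a,b}^n` agree before `i` and `(w i, w' i) = (a, b)`,
then `r w w'`. -/
lemma key (hn : 3 ≤ n)
    (r : (Fin n → Fin k) → (Fin n → Fin k) → Prop)
    (hr : IsStrictTotalOrder (Fin n → Fin k) r) (hu : Uniform r)
    (a b : Fin k)
    (hab : ∀ p : Fin n → Sum (Fin k) (Fin 1), IsPWord p → Canonical p →
      r (subst p (fun _ => a)) (subst p (fun _ => b)))
    (hne : a ≠ b)
    (w w' : Fin n → Fin k)
    (hw : ∀ i, w i = a ∨ w i = b) (hw' : ∀ i, w' i = a ∨ w' i = b)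
    (i : Fin n) (hia : w i = a) (hib : w' i = b)
    (hagree : ∀ j : Fin n, j < i → w j = w' j) : r w w' := by
  haveI := hr
  have hidiff : w i ≠ w' i := by rw [hia, hib]; exact hne
  by_cases hD : ∃ j, w j = b ∧ w' j = a
  · -- two wildcards
    obtain ⟨j0, hj0b, hj0a⟩ := hD
    set p : Fin n → Sum (Fin k) (Fin 2) := fun j =>
      if w j = w' j then Sum.inl (w j) else if w j = a then Sum.inr 0 else Sum.inr 1
      with hpdef
    have hpE : ∀ j, w j = w' j → p j = Sum.inl (w j) := by
      intro j h; show (if w j = w' j then _ else _) = _; rw [if_pos h]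
    have hp0 : ∀ j, w j ≠ w' j → w j = a → p j = Sum.inr 0 := by
      intro j h h'
      show (if w j = w' j then _ else if w j = a then _ else _) = _
      rw [if_neg h, if_pos h']
    have hp1 : ∀ j, w j ≠ w' j → w j ≠ a → p j = Sum.inr 1 := by
      intro j h h'
      show (if w j = w' j then _ else if w j = a then _ else _) = _
      rw [if_neg h, if_neg h']
    have hpi : p i = Sum.inr 0 := hp0 i hidiff hia
    have hpj0 : p j0 = Sum.inr 1 :=
      hp1 j0 (by rw [hj0b, hj0a]; exact Ne.symm hne) (by rw [hj0b]; exact Ne.symm hne)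
    have hp : IsPWord p := by
      intro j
      rcases (by decide : ∀ j : Fin 2, j = 0 ∨ j = 1) j with rfl | rfl
      · exact ⟨i, hpi⟩
      · exact ⟨j0, hpj0⟩
    have hcp : Canonical p := by
      intro j₁ j₂ hlt i₂ h₂
      obtain ⟨rfl, rfl⟩ := fin2_lt hlt
      refine ⟨i, ?_, hpi⟩
      have hdne : w i₂ ≠ w' i₂ := by
        intro h
        rw [hpE i₂ h] at h₂
        exact absurd h₂ (by simp)
      have hdna : w i₂ ≠ a := by
        intro h
        rw [hp0 i₂ hdne h] at h₂
        have := Sum.inr_injective h₂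
        exact absurd this (by decide)
      rcases lt_trichotomy i i₂ with h | h | h
      · exact h
      · exact absurd (h ▸ hia) hdna
      · exact absurd (hagree i₂ h) hdne
    have h1 : subst p (uab a b) = w := by
      funext j
      by_cases hA : w j = w' j
      · show Sum.elim id (uab a b) (p j) = w j
        rw [hpE j hA]; rfl
      · by_cases hB : w j = a
        · show Sum.elim id (uab a b) (p j) = w j
          rw [hp0 j hA hB, hB]; rfl
        · have hwb : w j = b := (hw j).resolve_left hB
          show Sum.elim id (uab a b) (p j) = w j
          rw [hp1 j hA hB, hwb]; rfl
    have h2 : subst p (uba a b) = w' := by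
      funext j
      by_cases hA : w j = w' j
      · show Sum.elim id (uba a b) (p j) = w' j
        rw [hpE j hA]; exact hA
      · show Sum.elim id (uba a b) (p j) = w' j
        by_cases hB : w j = a
        · have hb' : w' j = b := by
            rcases hw' j with h | h
            · exact absurd (hB.trans h.symm) hA
            · exact h
          rw [hp0 j hA hB, hb']; rfl
        · have hwb : w j = b := (hw j).resolve_left hB
          have ha' : w' j = a := by
            rcases hw' j with h | h
            · exact h
            · exact absurd (hwb.trans h.symm) hA
          rw [hp1 j hA hB, ha']; rfl
    rw [← h1, ← h2]
    exact ab_lt_ba a b hn r hr hu hab hne p hp hcp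
  · -- one wildcard
    push_neg at hD
    set p : Fin n → Sum (Fin k) (Fin 1) := fun j =>
      if w j = w' j then Sum.inl (w j) else Sum.inr 0 with hpdef
    have hpE : ∀ j, w j = w' j → p j = Sum.inl (w j) := by
      intro j h; show (if w j = w' j then _ else _) = _; rw [if_pos h]
    have hp0 : ∀ j, w j ≠ w' j → p j = Sum.inr 0 := by
      intro j h; show (if w j = w' j then _ else _) = _; rw [if_neg h]
    have hwa : ∀ j, w j ≠ w' j → w j = a ∧ w' j = b := by
      intro j hA
      have h1 : w j = a := by
        rcases hw j with h | h
        · exact h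
        · exfalso
          have h' : w' j = a := by
            rcases hw' j with h' | h'
            · exact h'
            · exact absurd (h.trans h'.symm) hA
          exact hD j h h'
      refine ⟨h1, ?_⟩
      rcases hw' j with h | h
      · exact absurd (h1.trans h.symm) hA
      · exact h
    have hp : IsPWord p := by
      intro j
      have : j = 0 := Subsingleton.elim _ _
      subst this
      exact ⟨i, hp0 i hidiff⟩
    have h1 : subst p (fun _ => a) = w := by
      funext j
      by_cases hA : w j = w' j
      · show Sum.elim id (fun _ => a) (p j) = w j
        rw [hpE j hA]; rfl
      · show Sum.elim id (fun _ => a) (p j) = w j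
        rw [hp0 j hA, (hwa j hA).1]; rfl
    have h2 : subst p (fun _ => b) = w' := by
      funext j
      by_cases hA : w j = w' j
      · show Sum.elim id (fun _ => b) (p j) = w' j
        rw [hpE j hA]; exact hA
      · show Sum.elim id (fun _ => b) (p j) = w' j
        rw [hp0 j hA, (hwa j hA).2]; rfl
    rw [← h1, ← h2]
    exact hab p hp (canon1 p)

end

/-- If `≺` is a uniform linear ordering on `[k]^n`, `n ≥ 3`, and `a < b` in the induced
ordering on the alphabet, then the restriction of `≺` to `{a,b}^n` is the lexicographic
ordering with `a` before `b`. -/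
theorem stmt4 (k n : ℕ) (hn : 3 ≤ n)
    (r : (Fin n → Fin k) → (Fin n → Fin k) → Prop)
    (hr : IsStrictTotalOrder (Fin n → Fin k) r) (hu : Uniform r)
    (a b : Fin k)
    -- `a < b` in the induced alphabet ordering
    (hab : ∀ p : Fin n → Sum (Fin k) (Fin 1), IsPWord p → Canonical p →
      r (subst p (fun _ => a)) (subst p (fun _ => b)))
    (w w' : Fin n → Fin k)
    (hw : ∀ i, w i = a ∨ w i = b) (hw' : ∀ i, w' i = a ∨ w' i = b) :
    r w w' ↔ ∃ i : Fin n, (w i = a ∧ w' i = b) ∧ ∀ j : Fin n, j < i → w j = w' j := by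
  haveI := hr
  have hne : a ≠ b := by
    intro h
    have hp : IsPWord (fun _ : Fin n => (Sum.inr 0 : Sum (Fin k) (Fin 1))) := by
      intro j
      have : j = 0 := Subsingleton.elim _ _
      subst this
      exact ⟨⟨0, by omega⟩, rfl⟩
    have := hab _ hp (canon1 _)
    rw [h] at this
    exact irrefl_of r _ this
  constructor
  · intro hrww'
    have hwne : w ≠ w' := by rintro rfl; exact irrefl_of r _ hrww'
    obtain ⟨i0, hi0⟩ := Function.ne_iff.mp hwne
    set s : Finset (Fin n) := Finset.univ.filter (fun i => w i ≠ w' i) with hsdef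
    have hsne : s.Nonempty := ⟨i0, by simp [hsdef, hi0]⟩
    set m := s.min' hsne with hmdef
    have hm : w m ≠ w' m := by
      have := s.min'_mem hsne
      simpa [hsdef] using this
    have hagree : ∀ j : Fin n, j < m → w j = w' j := by
      intro j hj
      by_contra hcon
      have : j ∈ s := by simp [hsdef, hcon]
      exact absurd (s.min'_le j this) (not_le.mpr hj)
    rcases hw m with hma | hmb
    · have hmb' : w' m = b := by
        rcases hw' m with h | h
        · exact absurd (hma.trans h.symm) hm
        · exact h
      exact ⟨m, ⟨hma, hmb'⟩, hagree⟩
    · exfalso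
      have hma' : w' m = a := by
        rcases hw' m with h | h
        · exact h
        · exact absurd (hmb.trans h.symm) hm
      have : r w' w :=
        key hn r hr hu a b hab hne w' w hw' hw m hma' hmb (fun j hj => (hagree j hj).symm)
      exact irrefl_of r _ (trans_of r hrww' this)
  · rintro ⟨i, ⟨ha, hb⟩, hagree⟩
    exact key hn r hr hu a b hab hne w w' hw hw' i ha hb hagree
end

section
/- Let ≺ be a uniform linear ordering on {0,1,…,k-1}^n with n ≥ 3 whose induced ordering on the alphabet is the usual order. Define a relation ⪯ on nontrivial subintervals of [k] by: [a,b] ⪯ [c,d] (for a < b, c < d) iff the word cb precedes the word da in the induced ordering on [k]^2. Then ⪯ is transitive: if [a,b] ⪯ [c,d] and [c,d] ⪯ [e,f], then [a,b] ⪯ [e,f]. -/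
/-- The relation `[a,b] ⪯ [c,d]` on nontrivial intervals of `[k]`, defined from a linear
ordering `r` on `[k]^n` via the 2-subcube given by the parameter word `p`:
`[a,b] ⪯ [c,d]` iff the word `cb` precedes the word `da`. -/
def IntRel {k n : ℕ} (r : (Fin n → Fin k) → (Fin n → Fin k) → Prop)
    (p : Fin n → Sum (Fin k) (Fin 2)) (a b c d : Fin k) : Prop :=
  r (subst p ![c, b]) (subst p ![d, a])

/-- Embed a length-3 pattern into length n by repeating the last position. -/
def emb3 {k n : ℕ} (s : Fin 3 → Sum (Fin k) (Fin 2)) : Fin n → Sum (Fin k) (Fin 2) :=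
  fun i => s ⟨min i 2, by omega⟩

lemma emb3_val {k n : ℕ} (s : Fin 3 → Sum (Fin k) (Fin 2)) (i : Fin n) (j : Fin 3)
    (h : min (i : ℕ) 2 = (j : ℕ)) : emb3 s i = s j := by
  unfold emb3; congr 1; exact Fin.ext h

lemma emb3_pword {k n : ℕ} (hn : 3 ≤ n) (s : Fin 3 → Sum (Fin k) (Fin 2))
    (hs : ∀ j : Fin 2, ∃ i : Fin 3, s i = Sum.inr j) :
    IsPWord (emb3 (n := n) s) := by
  intro j
  obtain ⟨i, hi⟩ := hs j
  exact ⟨⟨i, by omega⟩,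
    (emb3_val s ⟨i, by omega⟩ i (by simp only [Fin.val_mk]; omega)).trans hi⟩

lemma emb3_canonical {k n : ℕ} (s : Fin 3 → Sum (Fin k) (Fin 2))
    (hs : ∀ i₂ : Fin 3, s i₂ = Sum.inr 1 → ∃ i₁ : Fin 3, (i₁ : ℕ) < (i₂ : ℕ) ∧ s i₁ = Sum.inr 0) :
    Canonical (emb3 (n := n) s) := by
  intro j₁ j₂ hj i₂ hi₂
  obtain rfl : j₁ = 0 := by omega
  obtain rfl : j₂ = 1 := by omega
  have hm : min (i₂ : ℕ) 2 < 3 := by omega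
  obtain ⟨i₁, hlt, hv⟩ := hs ⟨min (i₂ : ℕ) 2, hm⟩
    ((emb3_val s i₂ ⟨min (i₂ : ℕ) 2, hm⟩ rfl).symm.trans hi₂)
  simp only [Fin.val_mk] at hlt
  have h1n : (i₁ : ℕ) < n := by have := i₂.isLt; omega
  refine ⟨⟨i₁, h1n⟩, ?_, (emb3_val s ⟨i₁, h1n⟩ i₁ (by simp only [Fin.val_mk]; omega)).trans hv⟩
  rw [Fin.lt_def]; simp only [Fin.val_mk]; omega

/-- For a uniform linear ordering on `[k]^n`, `n ≥ 3`, with the usual induced alphabet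
ordering, the relation `⪯` on nontrivial intervals is transitive. -/
theorem stmt5 (k n : ℕ) (hn : 3 ≤ n)
    (r : (Fin n → Fin k) → (Fin n → Fin k) → Prop)
    (hr : IsStrictTotalOrder (Fin n → Fin k) r) (hu : Uniform r)
    -- the induced ordering on the alphabet is the usual order
    (hbase : ∀ p : Fin n → Sum (Fin k) (Fin 1), IsPWord p → Canonical p →
      ∀ x y : Fin k, x < y → r (subst p (fun _ => x)) (subst p (fun _ => y)))
    (p : Fin n → Sum (Fin k) (Fin 2)) (hp : IsPWord p) (hpc : Canonical p)
    (a b c d e f : Fin k) (hab : a < b) (hcd : c < d) (hef : e < f)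
    (h1 : IntRel r p a b c d) (h2 : IntRel r p c d e f) :
    IntRel r p a b e f := by
  -- three patterns: "e * *", "* * a", "* c *"
  have pw1 : IsPWord (emb3 (n := n) ![Sum.inl e, Sum.inr 0, Sum.inr 1]) := by
    apply emb3_pword hn; intro j; fin_cases j
    · exact ⟨1, rfl⟩
    · exact ⟨2, rfl⟩
  have pw2 : IsPWord (emb3 (n := n) ![Sum.inr 0, Sum.inr 1, Sum.inl a]) := by
    apply emb3_pword hn; intro j; fin_cases j
    · exact ⟨0, rfl⟩
    · exact ⟨1, rfl⟩
  have pw3 : IsPWord (emb3 (n := n) ![Sum.inr 0, Sum.inl c, Sum.inr 1]) := by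
    apply emb3_pword hn; intro j; fin_cases j
    · exact ⟨0, rfl⟩
    · exact ⟨2, rfl⟩
  have can1 : Canonical (emb3 (n := n) ![Sum.inl e, Sum.inr 0, Sum.inr 1]) := by
    apply emb3_canonical; intro i₂ h; fin_cases i₂
    · simp at h
    · simp at h
    · exact ⟨1, by decide, rfl⟩
  have can2 : Canonical (emb3 (n := n) ![Sum.inr 0, Sum.inr 1, Sum.inl a]) := by
    apply emb3_canonical; intro i₂ h; fin_cases i₂
    · simp at h
    · exact ⟨0, by decide, rfl⟩
    · simp at h
  have can3 : Canonical (emb3 (n := n) ![Sum.inr 0, Sum.inl c, Sum.inr 1]) := by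
    apply emb3_canonical; intro i₂ h; fin_cases i₂
    · simp at h
    · simp at h
    · exact ⟨0, by decide, rfl⟩
  have H1 := (hu 2 p (emb3 ![Sum.inl e, Sum.inr 0, Sum.inr 1]) hp hpc pw1 can1
    ![c, b] ![d, a]).mp h1
  have H2 := (hu 2 p (emb3 ![Sum.inr 0, Sum.inr 1, Sum.inl a]) hp hpc pw2 can2
    ![e, d] ![f, c]).mp h2
  have eq1 : subst (emb3 (n := n) ![Sum.inl e, Sum.inr 0, Sum.inr 1]) ![d, a]
      = subst (emb3 (n := n) ![Sum.inr 0, Sum.inr 1, Sum.inl a]) ![e, d] := by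
    funext i
    rcases (by omega : min (i : ℕ) 2 = 0 ∨ min (i : ℕ) 2 = 1 ∨ min (i : ℕ) 2 = 2)
      with h | h | h <;> simp [subst, emb3, h]
  have eq2 : subst (emb3 (n := n) ![Sum.inr 0, Sum.inr 1, Sum.inl a]) ![f, c]
      = subst (emb3 (n := n) ![Sum.inr 0, Sum.inl c, Sum.inr 1]) ![f, a] := by
    funext i
    rcases (by omega : min (i : ℕ) 2 = 0 ∨ min (i : ℕ) 2 = 1 ∨ min (i : ℕ) 2 = 2)
      with h | h | h <;> simp [subst, emb3, h]
  have eq3 : subst (emb3 (n := n) ![Sum.inl e, Sum.inr 0, Sum.inr 1]) ![c, b]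
      = subst (emb3 (n := n) ![Sum.inr 0, Sum.inl c, Sum.inr 1]) ![e, b] := by
    funext i
    rcases (by omega : min (i : ℕ) 2 = 0 ∨ min (i : ℕ) 2 = 1 ∨ min (i : ℕ) 2 = 2)
      with h | h | h <;> simp [subst, emb3, h]
  rw [eq1] at H1
  rw [eq2] at H2
  have H3 : r (subst (emb3 (n := n) ![Sum.inr 0, Sum.inl c, Sum.inr 1]) ![e, b])
      (subst (emb3 (n := n) ![Sum.inr 0, Sum.inl c, Sum.inr 1]) ![f, a]) := by
    rw [← eq3]
    exact hr.toIsStrictOrder.toIsTrans.trans _ _ _ H1 H2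
  exact (hu 2 p (emb3 ![Sum.inr 0, Sum.inl c, Sum.inr 1]) hp hpc pw3 can3 ![e, b] ![f, a]).mpr H3
end

section
/- Let ≺ be a uniform linear ordering on {0,1,…,k-1}^n with n ≥ 3 whose induced ordering on the alphabet is the usual order, and define [a,b] ⪯ [c,d] iff cb ≺ da in the induced ordering on two-letter words. Then ⪯ satisfies comparability: for all nontrivial intervals, [a,b] ⪯ [c,d] or [c,d] ⪯ [a,b]. -/
/-- For a uniform linear ordering on `[k]^n`, `n ≥ 3`, with the usual induced alphabet
ordering, the relation `⪯` on nontrivial intervals is comparable. -/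
theorem stmt6 (k n : ℕ) (hn : 3 ≤ n)
    (r : (Fin n → Fin k) → (Fin n → Fin k) → Prop)
    (hr : IsStrictTotalOrder (Fin n → Fin k) r) (hu : Uniform r)
    (hbase : ∀ p : Fin n → Sum (Fin k) (Fin 1), IsPWord p → Canonical p →
      ∀ x y : Fin k, x < y → r (subst p (fun _ => x)) (subst p (fun _ => y)))
    (p : Fin n → Sum (Fin k) (Fin 2)) (hp : IsPWord p) (hpc : Canonical p)
    (a b c d : Fin k) (hab : a < b) (hcd : c < d) :
    IntRel r p a b c d ∨ IntRel r p c d a b := by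
  by_contra hcon
  push_neg at hcon
  obtain ⟨h1, h2⟩ := hcon
  unfold IntRel at h1 h2
  -- From trichotomy, get the reversed relations.
  have hne1 : subst p ![c, b] ≠ subst p ![d, a] := by
    intro he
    obtain ⟨i, hi⟩ := hp 0
    have : subst p ![c, b] i = subst p ![d, a] i := congrFun he i
    simp only [subst, hi, Sum.elim_inr, Matrix.cons_val_zero] at this
    exact absurd this (ne_of_lt hcd)
  have hne2 : subst p ![a, d] ≠ subst p ![b, c] := by
    intro he
    obtain ⟨i, hi⟩ := hp 0
    have : subst p ![a, d] i = subst p ![b, c] i := congrFun he i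
    simp only [subst, hi, Sum.elim_inr, Matrix.cons_val_zero] at this
    exact absurd this (ne_of_lt hab)
  have ρ1 : r (subst p ![d, a]) (subst p ![c, b]) := by
    rcases (or_iff_not_imp_left.2 fun h => or_iff_not_imp_right.2 fun h' => hr.trichotomous (subst p ![c, b]) (subst p ![d, a]) h h' : r (subst p ![c, b]) (subst p ![d, a]) ∨ subst p ![c, b] = subst p ![d, a] ∨ r (subst p ![d, a]) (subst p ![c, b])) with h | h | h
    · exact absurd h h1
    · exact absurd h hne1
    · exact h
  have ρ2 : r (subst p ![b, c]) (subst p ![a, d]) := by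
    rcases (or_iff_not_imp_left.2 fun h => or_iff_not_imp_right.2 fun h' => hr.trichotomous (subst p ![a, d]) (subst p ![b, c]) h h' : r (subst p ![a, d]) (subst p ![b, c]) ∨ subst p ![a, d] = subst p ![b, c] ∨ r (subst p ![b, c]) (subst p ![a, d])) with h | h | h
    · exact absurd h h2
    · exact absurd h hne2
    · exact h
  -- Three auxiliary parameter words on Fin n.
  set q1 : Fin n → Sum (Fin k) (Fin 2) :=
    fun i => if i.val = 1 then Sum.inr 1 else Sum.inr 0 with hq1def
  set q2 : Fin n → Sum (Fin k) (Fin 2) :=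
    fun i => if i.val = 0 then Sum.inl c else if i.val = 1 then Sum.inr 0 else Sum.inr 1
    with hq2def
  set q3 : Fin n → Sum (Fin k) (Fin 1) :=
    fun i => if i.val = 0 then Sum.inr 0 else if i.val = 1 then Sum.inl a else Sum.inl d
    with hq3def
  set U1 : Fin n → Fin k := fun i => if i.val = 1 then a else d with hU1def
  set U2 : Fin n → Fin k := fun i => if i.val = 1 then b else c with hU2def
  set U3 : Fin n → Fin k :=
    fun i => if i.val = 0 then c else if i.val = 1 then a else d with hU3def
  have h0n : (0 : ℕ) < n := by omega
  have h1n : (1 : ℕ) < n := by omega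
  have h2n : (2 : ℕ) < n := by omega
  -- q1 is a canonical parameter word
  have hq1p : IsPWord q1 := by
    intro j
    fin_cases j
    · exact ⟨⟨0, h0n⟩, by simp [hq1def]⟩
    · exact ⟨⟨1, h1n⟩, by simp [hq1def]⟩
  have hq1c : Canonical q1 := by
    intro j1 j2 hlt i2 hi2
    have hj1 : j1 = 0 := by omega
    have hj2 : j2 = 1 := by omega
    subst hj1; subst hj2
    have hi2v : i2.val = 1 := by
      by_contra hv
      simp only [hq1def, if_neg hv] at hi2
      exact absurd (Sum.inr.inj hi2) (by decide)
    refine ⟨⟨0, h0n⟩, ?_, ?_⟩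
    · simp [Fin.lt_def, hi2v]
    · simp [hq1def]
  -- q2 is a canonical parameter word
  have hq2p : IsPWord q2 := by
    intro j
    fin_cases j
    · exact ⟨⟨1, h1n⟩, by simp [hq2def]⟩
    · exact ⟨⟨2, h2n⟩, by simp [hq2def]⟩
  have hq2c : Canonical q2 := by
    intro j1 j2 hlt i2 hi2
    have hj1 : j1 = 0 := by omega
    have hj2 : j2 = 1 := by omega
    subst hj1; subst hj2
    have hi2v : 2 ≤ i2.val := by
      by_contra hv
      have hv2 : i2.val = 0 ∨ i2.val = 1 := by omega
      rcases hv2 with h | h <;>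
        simp only [hq2def, h, if_pos, if_neg, reduceIte] at hi2
      · exact absurd hi2 (by simp)
      · exact absurd (Sum.inr.inj hi2) (by decide)
    refine ⟨⟨1, h1n⟩, ?_, ?_⟩
    · simp [Fin.lt_def]; omega
    · simp [hq2def]
  -- q3 is a canonical parameter word
  have hq3p : IsPWord q3 := by
    intro j
    fin_cases j
    exact ⟨⟨0, h0n⟩, by simp [hq3def]⟩
  have hq3c : Canonical q3 := by
    intro j1 j2 hlt
    exact absurd hlt (by omega)
  -- Substitution computations
  have e1 : subst q1 ![d, a] = U1 := by
    funext i
    by_cases hi : i.val = 1 <;>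
      simp [subst, hq1def, hU1def, hi]
  have e2 : subst q1 ![c, b] = U2 := by
    funext i
    by_cases hi : i.val = 1 <;>
      simp [subst, hq1def, hU2def, hi]
  have e3 : subst q2 ![b, c] = U2 := by
    funext i
    by_cases h0 : i.val = 0
    · simp [subst, hq2def, hU2def, h0]
    · by_cases hi : i.val = 1 <;> simp [subst, hq2def, hU2def, h0, hi]
  have e4 : subst q2 ![a, d] = U3 := by
    funext i
    by_cases h0 : i.val = 0
    · simp [subst, hq2def, hU3def, h0]
    · by_cases hi : i.val = 1 <;> simp [subst, hq2def, hU3def, h0, hi]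
  have e5 : subst q3 (fun _ => c) = U3 := by
    funext i
    by_cases h0 : i.val = 0
    · simp [subst, hq3def, hU3def, h0]
    · by_cases hi : i.val = 1 <;> simp [subst, hq3def, hU3def, h0, hi]
  have e6 : subst q3 (fun _ => d) = U1 := by
    funext i
    by_cases h0 : i.val = 0
    · simp [subst, hq3def, hU1def, h0]
    · by_cases hi : i.val = 1 <;> simp [subst, hq3def, hU1def, h0, hi]
  -- Transport via uniformity
  have r12 : r U1 U2 := by
    have := (hu 2 p q1 hp hpc hq1p hq1c ![d, a] ![c, b]).mp ρ1
    rwa [e1, e2] at this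
  have r23 : r U2 U3 := by
    have := (hu 2 p q2 hp hpc hq2p hq2c ![b, c] ![a, d]).mp ρ2
    rwa [e3, e4] at this
  have r31 : r U3 U1 := by
    have := hbase q3 hq3p hq3c c d hcd
    rwa [e5, e6] at this
  exact hr.irrefl U1 (hr.trans _ _ _ (hr.trans _ _ _ r12 r23) r31)
end

section
/- For every tree-like relation ⪯ on the nontrivial subintervals of [k] there exists a weakly decreasing Schröder tree T with k leaves such that for all nontrivial intervals, [a,b] ⪯ [c,d] holds if and only if [a,b]_T ⪯_T [c,d]_T, where [a,b]_T denotes the bottommost internal node of T whose set of descendant leaves contains both a and b. -/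
/-- An abstract relation `R a b c d`, read "`[a,b] ⪯ [c,d]`", on nontrivial subintervals of
`[k]` is tree-like if it is transitive, comparable, and ultrametric. -/
def TreeLike (k : ℕ) (R : Fin k → Fin k → Fin k → Fin k → Prop) : Prop :=
  -- transitivity
  (∀ a b c d e f : Fin k, a < b → c < d → e < f →
      R a b c d → R c d e f → R a b e f) ∧
  -- comparability
  (∀ a b c d : Fin k, a < b → c < d → R a b c d ∨ R c d a b) ∧
  -- ultrametric property: for a < b < c, [a,c] ≈ max([a,b],[b,c])
  (∀ a b c : Fin k, a < b → b < c →
      (R a b b c → (R a c b c ∧ R b c a c)) ∧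
      (R b c a b → (R a c a b ∧ R a b a c)))

/-- `[a',b']` is the closure of `[a,b]`: `a'` is the least element with `[a',b] ≈ [a,b]`
and `b'` is the largest element with `[a,b'] ≈ [a,b]`. -/
def IsClosure {k : ℕ} (R : Fin k → Fin k → Fin k → Fin k → Prop)
    (a b a' b' : Fin k) : Prop :=
  a' ≤ a ∧ b ≤ b' ∧
  (R a' b a b ∧ R a b a' b) ∧
  (R a b' a b ∧ R a b a b') ∧
  (∀ x : Fin k, x < b → R x b a b → R a b x b → a' ≤ x) ∧
  (∀ y : Fin k, a < y → R a y a b → R a b a y → y ≤ b')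

/-- A weakly decreasing Schröder tree with `k` leaves, encoded by the laminar family of
intervals of descendant leaves of its internal nodes (a node is the pair of endpoints of
its leaf interval), together with a total preorder on internal nodes for which strict
containment (i.e. descendance) is strictly decreasing.  Every internal node of such a tree
has at least two children, which under this encoding is automatic. -/
structure WDSchroeder (k : ℕ) where
  /-- internal nodes, as intervals `[a,b]` of leaves, `a < b` -/
  nodes : Finset (Fin k × Fin k)
  nontriv : ∀ X ∈ nodes, X.1 < X.2
  /-- the root contains all leaves -/
  root : 2 ≤ k → ∃ X ∈ nodes, ∀ a : Fin k, X.1 ≤ a ∧ a ≤ X.2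
  /-- laminarity: the leaf intervals of two nodes are nested or disjoint -/
  laminar : ∀ X ∈ nodes, ∀ Y ∈ nodes,
    Set.Icc X.1 X.2 ⊆ Set.Icc Y.1 Y.2 ∨ Set.Icc Y.1 Y.2 ⊆ Set.Icc X.1 X.2 ∨
      Disjoint (Set.Icc X.1 X.2) (Set.Icc Y.1 Y.2)
  /-- the preorder `⪯_T` on internal nodes -/
  pre : Fin k × Fin k → Fin k × Fin k → Prop
  pre_trans : ∀ X ∈ nodes, ∀ Y ∈ nodes, ∀ Z ∈ nodes, pre X Y → pre Y Z → pre X Z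
  pre_total : ∀ X ∈ nodes, ∀ Y ∈ nodes, pre X Y ∨ pre Y X
  /-- every path from the root is strictly decreasing -/
  decreasing : ∀ X ∈ nodes, ∀ Y ∈ nodes,
    Set.Icc X.1 X.2 ⊂ Set.Icc Y.1 Y.2 → pre X Y ∧ ¬ pre Y X

/-- `X` is the node `[a,b]_T`: the bottommost node of `T` whose leaf interval contains both
`a` and `b`. -/
def IsLCA {k : ℕ} (T : WDSchroeder k) (a b : Fin k) (X : Fin k × Fin k) : Prop :=
  X ∈ T.nodes ∧ X.1 ≤ a ∧ a ≤ X.2 ∧ X.1 ≤ b ∧ b ≤ X.2 ∧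
    ∀ Y ∈ T.nodes, Y.1 ≤ a → a ≤ Y.2 → Y.1 ≤ b → b ≤ Y.2 → Y.1 ≤ X.1 ∧ X.2 ≤ Y.2

namespace Stmt8Aux

variable {k : ℕ} {R : Fin k → Fin k → Fin k → Fin k → Prop}

/-- `[p,q]` is closed: no strictly larger equivalent interval. -/
def Closed (R : Fin k → Fin k → Fin k → Fin k → Prop) (p q : Fin k) : Prop :=
  p < q ∧ ∀ x y : Fin k, x ≤ p → q ≤ y → R x y p q → R p q x y → x = p ∧ y = q

lemma rrefl (hR : TreeLike k R) {a b : Fin k} (h : a < b) : R a b a b :=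
  (hR.2.1 a b a b h h).elim id id

/-- A subinterval is `⪯` any superinterval. -/
lemma sub (hR : TreeLike k R) {x a b y : Fin k} (hxa : x ≤ a) (hab : a < b) (hby : b ≤ y) :
    R a b x y := by
  have hxb : x < b := lt_of_le_of_lt hxa hab
  have h1 : R a b x b := by
    rcases eq_or_lt_of_le hxa with rfl | hlt
    · exact rrefl hR hab
    · rcases hR.2.1 x a a b hlt hab with h | h
      · exact ((hR.2.2 x a b hlt hab).1 h).2
      · exact hR.1 a b x a x b hab hlt hxb h ((hR.2.2 x a b hlt hab).2 h).2
  have h2 : R x b x y := by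
    rcases eq_or_lt_of_le hby with rfl | hlt
    · exact rrefl hR hxb
    · rcases hR.2.1 x b b y hxb hlt with h | h
      · exact hR.1 x b b y x y hxb hlt (lt_trans hxb hlt) h ((hR.2.2 x b y hxb hlt).1 h).2
      · exact ((hR.2.2 x b y hxb hlt).2 h).2
  exact hR.1 a b x b x y hab hxb (lt_of_lt_of_le hxb hby) h1 h2

lemma lam_core (hR : TreeLike k R) {a b c d : Fin k}
    (hCab : Closed R a b) (hCcd : Closed R c d)
    (hac : a < c) (hcb : c ≤ b) (hbd : b < d) : False := by
  have hab := hCab.1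
  have hcd := hCcd.1
  rcases hR.2.1 a b c d hab hcd with h | h
  · have h1 : R a c c d := hR.1 a c a b c d hac hab hcd (sub hR le_rfl hac hcb) h
    have h2 := (hR.2.2 a c d hac hcd).1 h1
    exact absurd (hCcd.2 a d hac.le le_rfl h2.1 h2.2).1 hac.ne
  · have h1 : R b d a b := hR.1 b d c d a b hbd hcd hab (sub hR hcb hbd le_rfl) h
    have h2 := (hR.2.2 a b d hab hbd).2 h1
    exact absurd (hCab.2 a d le_rfl hbd.le h2.1 h2.2).2 hbd.ne'

lemma laminar_closed (hR : TreeLike k R) {a b c d : Fin k}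
    (hCab : Closed R a b) (hCcd : Closed R c d) :
    Set.Icc a b ⊆ Set.Icc c d ∨ Set.Icc c d ⊆ Set.Icc a b ∨
      Disjoint (Set.Icc a b) (Set.Icc c d) := by
  rcases le_or_gt c a with h1 | h1
  · rcases le_or_gt b d with h2 | h2
    · exact Or.inl (Set.Icc_subset_Icc h1 h2)
    · rcases le_or_gt a c with h3 | h3
      · exact Or.inr (Or.inl (Set.Icc_subset_Icc h3 h2.le))
      · rcases le_or_gt a d with h4 | h4
        · exact absurd (lam_core hR hCcd hCab h3 h4 h2) id
        · refine Or.inr (Or.inr ?_)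
          rw [Set.disjoint_left]
          intro t ht1 ht2
          exact absurd (ht1.1.trans ht2.2) (not_le.mpr h4)
  · rcases le_or_gt d b with h2 | h2
    · exact Or.inr (Or.inl (Set.Icc_subset_Icc h1.le h2))
    · rcases le_or_gt c b with h3 | h3
      · exact absurd (lam_core hR hCab hCcd h1 h3 h2) id
      · refine Or.inr (Or.inr ?_)
        rw [Set.disjoint_left]
        intro t ht1 ht2
        exact absurd (ht2.1.trans ht1.2) (not_le.mpr h3)

lemma closure (hR : TreeLike k R) {a b : Fin k} (hab : a < b) :
    ∃ p q : Fin k, Closed R p q ∧ p ≤ a ∧ b ≤ q ∧ R p q a b ∧ R a b p q := by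
  classical
  set A : Finset (Fin k) := Finset.univ.filter fun x => x ≤ a ∧ R x b a b ∧ R a b x b with hA
  set B : Finset (Fin k) := Finset.univ.filter fun y => b ≤ y ∧ R a y a b ∧ R a b a y with hB
  have haA : a ∈ A := by simp [hA, rrefl hR hab]
  have hbB : b ∈ B := by simp [hB, rrefl hR hab]
  set p := A.min' ⟨a, haA⟩ with hp
  set q := B.max' ⟨b, hbB⟩ with hq
  have hpA : p ∈ A := A.min'_mem _
  have hqB : q ∈ B := B.max'_mem _
  simp only [hA, Finset.mem_filter, Finset.mem_univ, true_and] at hpA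
  simp only [hB, Finset.mem_filter, Finset.mem_univ, true_and] at hqB
  obtain ⟨hpa, hpb1, hpb2⟩ := hpA
  obtain ⟨hbq, hq1, hq2⟩ := hqB
  have hpb : p < b := lt_of_le_of_lt hpa hab
  have haq : a < q := lt_of_lt_of_le hab hbq
  have hpq : p < q := lt_of_le_of_lt hpa haq
  have e2 : R a b p q := sub hR hpa hab hbq
  clear_value p q
  have e1 : R p q a b := by
    rcases eq_or_lt_of_le hpa with heq | hlt
    · rw [heq]; exact hq1
    · rcases hR.2.1 p a a q hlt haq with h | h
      · have h2 := (hR.2.2 p a q hlt haq).1 h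
        exact hR.1 p q a q a b hpq haq hab h2.1 hq1
      · have h3 := (hR.2.2 p a q hlt haq).2 h
        have h4 : R p a a b := hR.1 p a p b a b hlt hpb hab (sub hR le_rfl hlt hab.le) hpb1
        exact hR.1 p q p a a b hpq hlt hab h3.1 h4
  refine ⟨p, q, ⟨hpq, ?_⟩, hpa, hbq, e1, e2⟩
  intro x y hxp hqy hxy1 hxy2
  have hxa : x ≤ a := le_trans hxp hpa
  have hby : b ≤ y := le_trans hbq hqy
  have hxb : x < b := lt_of_le_of_lt hxa hab
  have hay : a < y := lt_of_lt_of_le hab hby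
  have hxy : x < y := lt_of_lt_of_le hxb hby
  have s2 : R x y a b := hR.1 x y p q a b hxy hpq hab hxy1 e1
  have hxmem : x ∈ A := by
    have r1 : R x b a b :=
      hR.1 x b x y a b hxb hxy hab (sub hR le_rfl hxb hby) s2
    have r2 : R a b x b := sub hR hxa hab le_rfl
    simp only [hA, Finset.mem_filter, Finset.mem_univ, true_and]
    exact ⟨hxa, r1, r2⟩
  have hymem : y ∈ B := by
    have r1 : R a y a b :=
      hR.1 a y x y a b hay hxy hab (sub hR hxa hay le_rfl) s2
    have r2 : R a b a y := sub hR le_rfl hab hby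
    simp only [hB, Finset.mem_filter, Finset.mem_univ, true_and]
    exact ⟨hby, r1, r2⟩
  refine ⟨le_antisymm hxp ?_, le_antisymm ?_ hqy⟩
  · rw [hp]; exact A.min'_le x hxmem
  · rw [hq]; exact B.le_max' y hymem

lemma lca_min (hR : TreeLike k R) {p q z w a b : Fin k}
    (hC : Closed R p q) (hZ : Closed R z w) (hab : a < b)
    (hpa : p ≤ a) (hbq : b ≤ q) (e1 : R p q a b)
    (hza : z ≤ a) (haw : a ≤ w) (hbw : b ≤ w) :
    z ≤ p ∧ q ≤ w := by
  rcases laminar_closed hR hC hZ with h | h | h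
  · exact (Set.Icc_subset_Icc_iff hC.1.le).mp h
  · obtain ⟨hpz, hwq⟩ := (Set.Icc_subset_Icc_iff hZ.1.le).mp h
    have r1 : R p q z w := hR.1 p q a b z w hC.1 hab hZ.1 e1 (sub hR hza hab hbw)
    have r2 : R z w p q := sub hR hpz hZ.1 hwq
    obtain ⟨h1, h2⟩ := hZ.2 p q hpz hwq r1 r2
    exact ⟨h1.ge, h2.le⟩
  · exact absurd h (Set.not_disjoint_iff.mpr
      ⟨a, Set.mem_Icc.mpr ⟨hpa, le_trans hab.le hbq⟩, Set.mem_Icc.mpr ⟨hza, haw⟩⟩)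

end Stmt8Aux

open Stmt8Aux

/-- Every tree-like relation on the nontrivial intervals of `[k]` is realized as the
relation `[a,b]_T ⪯_T [c,d]_T` of a weakly decreasing Schröder tree `T` with `k` leaves. -/
theorem stmt8 (k : ℕ) (R : Fin k → Fin k → Fin k → Fin k → Prop) (hR : TreeLike k R) :
    ∃ T : WDSchroeder k, ∀ a b c d : Fin k, a < b → c < d →
      ∃ X Y : Fin k × Fin k, IsLCA T a b X ∧ IsLCA T c d Y ∧
        (R a b c d ↔ T.pre X Y) := by
  classical
  refine ⟨{
    nodes := Finset.univ.filter fun X : Fin k × Fin k => Closed R X.1 X.2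
    nontriv := fun X hX => ((Finset.mem_filter.mp hX).2).1
    root := ?_
    laminar := fun X hX Y hY =>
      laminar_closed hR (Finset.mem_filter.mp hX).2 (Finset.mem_filter.mp hY).2
    pre := fun X Y => R X.1 X.2 Y.1 Y.2
    pre_trans := fun X hX Y hY Z hZ h1 h2 =>
      hR.1 _ _ _ _ _ _ (Finset.mem_filter.mp hX).2.1 (Finset.mem_filter.mp hY).2.1
        (Finset.mem_filter.mp hZ).2.1 h1 h2
    pre_total := fun X hX Y hY =>
      hR.2.1 _ _ _ _ (Finset.mem_filter.mp hX).2.1 (Finset.mem_filter.mp hY).2.1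
    decreasing := ?_ }, ?_⟩
  · -- root
    intro hk
    have h0 : 0 < k := by omega
    have hlast : k - 1 < k := by omega
    refine ⟨(⟨0, h0⟩, ⟨k - 1, hlast⟩), ?_, ?_⟩
    · simp only [Finset.mem_filter, Finset.mem_univ, true_and]
      refine ⟨Fin.mk_lt_mk.mpr (by omega), ?_⟩
      intro x y hx hy _ _
      have hx' : (⟨0, h0⟩ : Fin k) ≤ x := by simp [Fin.le_def]
      have hy' : y ≤ (⟨k - 1, hlast⟩ : Fin k) := by
        have := y.isLt
        simp only [Fin.le_def]
        omega
      exact ⟨le_antisymm hx hx', le_antisymm hy' hy⟩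
    · intro x
      have := x.isLt
      constructor <;> simp only [Fin.le_def] <;> omega
  · -- decreasing
    intro X hX Y hY hss
    have hCX := (Finset.mem_filter.mp hX).2
    obtain ⟨h1, h2⟩ := (Set.Icc_subset_Icc_iff hCX.1.le).mp hss.subset
    refine ⟨sub hR h1 hCX.1 h2, fun h => ?_⟩
    obtain ⟨e1, e2⟩ := hCX.2 Y.1 Y.2 h1 h2 h (sub hR h1 hCX.1 h2)
    exact hss.ne (by rw [← e1, ← e2])
  · -- realization
    intro a b c d hab hcd
    obtain ⟨p, q, hC, hpa, hbq, e1, e2⟩ := closure hR hab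
    obtain ⟨p', q', hC', hpc, hdq, f1, f2⟩ := closure hR hcd
    refine ⟨(p, q), (p', q'),
      ⟨?_, hpa, le_trans hab.le hbq, le_trans hpa hab.le, hbq, ?_⟩,
      ⟨?_, hpc, le_trans hcd.le hdq, le_trans hpc hcd.le, hdq, ?_⟩, ?_⟩
    · simp only [Finset.mem_filter, Finset.mem_univ, true_and]; exact hC
    · intro Z hZ hz1 hz2 hz3 hz4
      exact lca_min hR hC (Finset.mem_filter.mp hZ).2 hab hpa hbq e1 hz1 hz2 hz4
    · simp only [Finset.mem_filter, Finset.mem_univ, true_and]; exact hC'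
    · intro Z hZ hz1 hz2 hz3 hz4
      exact lca_min hR hC' (Finset.mem_filter.mp hZ).2 hcd hpc hdq f1 hz1 hz2 hz4
    · constructor
      · intro h
        exact hR.1 p q a b p' q' hC.1 hab hC'.1 e1 (hR.1 a b c d p' q' hab hcd hC'.1 h f2)
      · intro h
        exact hR.1 a b p q c d hab hC.1 hcd e2 (hR.1 p q p' q' c d hC.1 hC'.1 hcd h f1)
end

section
/- Let ⪯ be a tree-like relation on nontrivial intervals of [k] and define closure([a,b]) = [a',b'] where a' is the least element with [a',b] ≈ [a,b] and b' is the largest with [a,b'] ≈ [a,b]. Then closure is idempotent: closure(closure([a,b])) = closure([a,b]) for every nontrivial interval. -/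
/-- The closure operation is idempotent. -/
theorem stmt10 (k : ℕ) (R : Fin k → Fin k → Fin k → Fin k → Prop) (hR : TreeLike k R)
    (a b a' b' a'' b'' : Fin k) (hab : a < b)
    (hcl : IsClosure R a b a' b') (hcl' : IsClosure R a' b' a'' b'') :
    a'' = a' ∧ b'' = b' := by
  obtain ⟨tr, comp, ult⟩ := hR
  obtain ⟨ha1, hb1, ⟨hE1, hE2⟩, ⟨hF1, hF2⟩, hmin, hmax⟩ := hcl
  obtain ⟨ha2, hb2, ⟨hG1, hG2⟩, ⟨hH1, hH2⟩, hmin', hmax'⟩ := hcl'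
  have hab1 : a' < b := lt_of_le_of_lt ha1 hab
  have hab2 : a < b' := lt_of_lt_of_le hab hb1
  have hab3 : a' < b' := lt_of_le_of_lt ha1 hab2
  have hab4 : a'' < b' := lt_of_le_of_lt ha2 hab3
  have hab5 : a' < b'' := lt_of_lt_of_le hab3 hb2
  -- [a',b'] ≈ [a,b]
  have hE : R a' b' a b ∧ R a b a' b' := by
    rcases eq_or_lt_of_le hb1 with h | h
    · subst h; exact ⟨hE1, hE2⟩
    · have hbb' : R b b' a b := by
        rcases comp a b b b' hab h with hc | hc
        · have h1 := (ult a b b' hab h).1 hc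
          exact tr b b' a b' a b h hab2 hab h1.2 hF1
        · exact hc
      have hbb'2 : R b b' a' b := tr b b' a b a' b h hab hab1 hbb' hE2
      have h1 := (ult a' b b' hab1 h).2 hbb'2
      exact ⟨tr a' b' a' b a b hab3 hab1 hab h1.1 hE1,
             tr a b a' b a' b' hab hab1 hab3 hE2 h1.2⟩
  have hAeq : a'' = a' := by
    rcases eq_or_lt_of_le ha2 with h | h
    · exact h
    · have ha''b : a'' < b := lt_trans h hab1
      have H1 : R a'' b' a b ∧ R a b a'' b' :=
        ⟨tr a'' b' a' b' a b hab4 hab3 hab hG1 hE.1,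
         tr a b a' b' a'' b' hab hab3 hab4 hE.2 hG2⟩
      have key : R a'' b a b ∧ R a b a'' b := by
        rcases comp a'' a' a' b h hab1 with hc | hc
        · have h2 := (ult a'' a' b h hab1).1 hc
          exact ⟨tr a'' b a' b a b ha''b hab1 hab h2.1 hE1,
                 tr a b a' b a'' b hab hab1 ha''b hE2 h2.2⟩
        · have h2 := (ult a'' a' b h hab1).2 hc
          rcases comp a'' a' a' b' h hab3 with hd | hd
          · have hx : R a'' a' a b := tr a'' a' a' b' a b h hab3 hab hd hE.1
            have hy : R a b a'' a' := tr a b a' b a'' a' hab hab1 h hE2 hc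
            exact ⟨tr a'' b a'' a' a b ha''b h hab h2.1 hx,
                   tr a b a'' a' a'' b hab h ha''b hy h2.2⟩
          · have h3 := (ult a'' a' b' h hab3).2 hd
            have hp : R a'' a' a b := tr a'' a' a'' b' a b h hab4 hab h3.2 H1.1
            have hq : R a b a'' a' := tr a b a'' b' a'' a' hab hab4 h H1.2 h3.1
            exact ⟨tr a'' b a'' a' a b ha''b h hab h2.1 hp,
                   tr a b a'' a' a'' b hab h ha''b hq h2.2⟩
      exact le_antisymm ha2 (hmin a'' ha''b key.1 key.2)
  have hBeq : b'' = b' := by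
    rcases eq_or_lt_of_le hb2 with h | h
    · exact h.symm
    · have hab'' : a < b'' := lt_trans hab2 h
      have H1 : R a' b'' a b ∧ R a b a' b'' :=
        ⟨tr a' b'' a' b' a b hab5 hab3 hab hH1 hE.1,
         tr a b a' b' a' b'' hab hab3 hab5 hE.2 hH2⟩
      have key : R a b'' a b ∧ R a b a b'' := by
        rcases comp b' b'' a b' h hab2 with hc | hc
        · have h2 := (ult a b' b'' hab2 h).2 hc
          exact ⟨tr a b'' a b' a b hab'' hab2 hab h2.1 hF1,
                 tr a b a b' a b'' hab hab2 hab'' hF2 h2.2⟩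
        · have h2 := (ult a b' b'' hab2 h).1 hc
          rcases comp b' b'' a' b' h hab3 with hd | hd
          · have hp : R b' b'' a b := tr b' b'' a' b' a b h hab3 hab hd hE.1
            have hq : R a b b' b'' := tr a b a b' b' b'' hab hab2 h hF2 hc
            exact ⟨tr a b'' b' b'' a b hab'' h hab h2.1 hp,
                   tr a b b' b'' a b'' hab h hab'' hq h2.2⟩
          · have h3 := (ult a' b' b'' hab3 h).1 hd
            have hp : R b' b'' a b := tr b' b'' a' b'' a b h hab5 hab h3.2 H1.1
            have hq : R a b b' b'' := tr a b a' b'' b' b'' hab hab5 h H1.2 h3.1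
            exact ⟨tr a b'' b' b'' a b hab'' h hab h2.1 hp,
                   tr a b b' b'' a b'' hab h hab'' hq h2.2⟩
      exact le_antisymm (hmax b'' hab'' key.1 key.2) hb2
  exact ⟨hAeq, hBeq⟩
end

section
/- Let ⪯ be a tree-like relation on nontrivial intervals of [k], and let N = {closure([a,b]) : a < b} be the set of closed intervals, where closure([a,b]) = [a',b'] with a' least such that [a',b] ≈ [a,b] and b' largest such that [a,b'] ≈ [a,b]. Then any two intervals in N are either disjoint or one contains the other (they form a laminar family). -/
section Aux

variable {k : ℕ} {R : Fin k → Fin k → Fin k → Fin k → Prop}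

lemma tl_refl (hR : TreeLike k R) {a b : Fin k} (h : a < b) : R a b a b := by
  rcases hR.2.1 a b a b h h with h' | h' <;> exact h'

/-- Both halves of an interval are ⪯ the whole interval. -/
lemma tl_ext (hR : TreeLike k R) {a b c : Fin k} (hab : a < b) (hbc : b < c) :
    R a b a c ∧ R b c a c := by
  obtain ⟨ht, hc, hu⟩ := hR
  rcases hc a b b c hab hbc with h | h
  · obtain ⟨-, h2⟩ := (hu a b c hab hbc).1 h
    exact ⟨ht a b b c a c hab hbc (hab.trans hbc) h h2, h2⟩
  · obtain ⟨-, h2⟩ := (hu a b c hab hbc).2 h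
    exact ⟨h2, ht b c a b a c hbc hab (hab.trans hbc) h h2⟩

/-- A subinterval is ⪯ its superinterval. -/
lemma tl_mono (hR : TreeLike k R) {a b x y : Fin k} (hax : a ≤ x) (hxy : x < y)
    (hyb : y ≤ b) : R x y a b := by
  rcases eq_or_lt_of_le hax with rfl | hax
  · rcases eq_or_lt_of_le hyb with rfl | hyb
    · exact tl_refl hR hxy
    · exact (tl_ext hR hxy hyb).1
  · rcases eq_or_lt_of_le hyb with rfl | hyb
    · exact (tl_ext hR hax hxy).2
    · exact hR.1 x y x b a b hxy (hxy.trans hyb) (hax.trans (hxy.trans hyb))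
        (tl_ext hR hxy hyb).1 (tl_ext hR hax (hxy.trans hyb)).2

/-- Any interval between the original and its closure is ≈ the original. -/
lemma tl_closure_equiv (hR : TreeLike k R) {a₀ b₀ a b x y : Fin k}
    (h₀ : a₀ < b₀) (h : IsClosure R a₀ b₀ a b)
    (hax : a ≤ x) (hxa : x ≤ a₀) (hby : b₀ ≤ y) (hyb : y ≤ b) :
    R x y a₀ b₀ ∧ R a₀ b₀ x y := by
  obtain ⟨ha, hb, ⟨hl1, hl2⟩, ⟨hr1, hr2⟩, -, -⟩ := h
  have hab' : a < b₀ := lt_of_le_of_lt ha h₀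
  have ha₀y : a₀ < y := h₀.trans_le hby
  -- step 1 : [x, b₀] ≈ [a₀, b₀]
  have s1 : R x b₀ a₀ b₀ ∧ R a₀ b₀ x b₀ := by
    rcases eq_or_lt_of_le hxa with rfl | hxa'
    · exact ⟨tl_refl hR h₀, tl_refl hR h₀⟩
    · have hxb : x < b₀ := hxa'.trans h₀
      exact ⟨hR.1 x b₀ a b₀ a₀ b₀ hxb hab' h₀ (tl_mono hR hax hxb le_rfl) hl1,
        tl_mono hR hxa h₀ le_rfl⟩
  -- step 2 : [a₀, y] ≈ [a₀, b₀]
  have s2 : R a₀ y a₀ b₀ ∧ R a₀ b₀ a₀ y := by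
    rcases eq_or_lt_of_le hyb with rfl | hyb'
    · exact ⟨hr1, hr2⟩
    · exact ⟨hR.1 a₀ y a₀ b a₀ b₀ ha₀y (h₀.trans_le hb) h₀
        (tl_mono hR le_rfl ha₀y hyb) hr1, tl_mono hR le_rfl h₀ hby⟩
  rcases eq_or_lt_of_le hxa with rfl | hxa'
  · exact s2
  · -- x < a₀ < y : use the ultrametric property
    have hchain : R x a₀ a₀ y :=
      hR.1 x a₀ x b₀ a₀ y hxa' (hxa'.trans h₀) ha₀y
        (tl_mono hR le_rfl hxa' h₀.le)
        (hR.1 x b₀ a₀ b₀ a₀ y (hxa'.trans h₀) h₀ ha₀y s1.1 s2.2)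
    obtain ⟨u1, u2⟩ := (hR.2.2 x a₀ y hxa' ha₀y).1 hchain
    have hxy : x < y := hxa'.trans ha₀y
    exact ⟨hR.1 x y a₀ y a₀ b₀ hxy ha₀y h₀ u1 s2.1,
      hR.1 a₀ b₀ a₀ y x y h₀ ha₀y hxy s2.2 u2⟩

/-- Two closed intervals cannot cross. -/
lemma tl_cross (hR : TreeLike k R) {a₀ b₀ c₀ d₀ a b c d : Fin k}
    (hab : a₀ < b₀) (hcd : c₀ < d₀)
    (h1 : IsClosure R a₀ b₀ a b) (h2 : IsClosure R c₀ d₀ c d)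
    (hac : a < c) (hcb : c ≤ b) (hbd : b < d) : False := by
  have hcc : c ≤ c₀ := h2.1
  have hdd : d₀ ≤ d := h2.2.1
  have haa : a ≤ a₀ := h1.1
  have hbb : b₀ ≤ b := h1.2.1
  have hcd₀ : c < d₀ := lt_of_le_of_lt hcc hcd
  have had₀ : a < d₀ := hac.trans hcd₀
  have ha₀b : a₀ < b := hab.trans_le hbb
  have ha₀d : a₀ < d := ha₀b.trans hbd
  rcases hR.2.1 a₀ b₀ c₀ d₀ hab hcd with h | h
  · -- [a₀,b₀] ⪯ [c₀,d₀]: extend [c₀,d₀] left to a, contradicting minimality of c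
    have hcd0 : R c d₀ c₀ d₀ ∧ R c₀ d₀ c d₀ :=
      tl_closure_equiv hR hcd h2 le_rfl hcc le_rfl hdd
    have hab' : R a b a₀ b₀ ∧ R a₀ b₀ a b :=
      tl_closure_equiv hR hab h1 le_rfl haa hbb le_rfl
    have hab'' : a < b := haa.trans_lt ha₀b
    have h3 : R a c c d₀ :=
      hR.1 a c a₀ b₀ c d₀ hac hab hcd₀
        (hR.1 a c a b a₀ b₀ hac hab'' hab (tl_mono hR le_rfl hac hcb) hab'.1)
        (hR.1 a₀ b₀ c₀ d₀ c d₀ hab hcd hcd₀ h hcd0.2)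
    obtain ⟨u1, u2⟩ := (hR.2.2 a c d₀ hac hcd₀).1 h3
    have h5 : R a d₀ c₀ d₀ := hR.1 a d₀ c d₀ c₀ d₀ had₀ hcd₀ hcd u1 hcd0.1
    have h6 : R c₀ d₀ a d₀ := hR.1 c₀ d₀ c d₀ a d₀ hcd hcd₀ had₀ hcd0.2 u2
    exact absurd (h2.2.2.2.2.1 a had₀ h5 h6) (not_le.mpr hac)
  · -- [c₀,d₀] ⪯ [a₀,b₀]: extend [a₀,b₀] right to d, contradicting maximality of b
    have hab2 : R a₀ b a₀ b₀ ∧ R a₀ b₀ a₀ b :=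
      tl_closure_equiv hR hab h1 haa le_rfl hbb le_rfl
    have hcd' : R c d c₀ d₀ ∧ R c₀ d₀ c d :=
      tl_closure_equiv hR hcd h2 le_rfl hcc hdd le_rfl
    have hcd'' : c < d := hcc.trans_lt (hcd.trans_le hdd)
    have h3 : R b d a₀ b :=
      hR.1 b d c₀ d₀ a₀ b hbd hcd ha₀b
        (hR.1 b d c d c₀ d₀ hbd hcd'' hcd (tl_mono hR hcb hbd le_rfl) hcd'.1)
        (hR.1 c₀ d₀ a₀ b₀ a₀ b hcd hab ha₀b h hab2.2)
    obtain ⟨u1, u2⟩ := (hR.2.2 a₀ b d ha₀b hbd).2 h3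
    have h5 : R a₀ d a₀ b₀ := hR.1 a₀ d a₀ b a₀ b₀ ha₀d ha₀b hab u1 hab2.1
    have h6 : R a₀ b₀ a₀ d := hR.1 a₀ b₀ a₀ b a₀ d hab ha₀b ha₀d hab2.2 u2
    exact absurd (h1.2.2.2.2.2 d ha₀d h5 h6) (not_le.mpr hbd)

end Aux

/-- The closed intervals of a tree-like relation form a laminar family: any two are
disjoint or nested. -/
theorem stmt11 (k : ℕ) (R : Fin k → Fin k → Fin k → Fin k → Prop) (hR : TreeLike k R)
    (a b c d a₀ b₀ c₀ d₀ : Fin k) (hab : a₀ < b₀) (hcd : c₀ < d₀)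
    (h1 : IsClosure R a₀ b₀ a b) (h2 : IsClosure R c₀ d₀ c d) :
    Disjoint (Set.Icc a b) (Set.Icc c d) ∨
      Set.Icc a b ⊆ Set.Icc c d ∨ Set.Icc c d ⊆ Set.Icc a b := by
  have hab' : a ≤ b := le_trans h1.1 (le_trans hab.le h1.2.1)
  have hcd' : c ≤ d := le_trans h2.1 (le_trans hcd.le h2.2.1)
  by_contra hcon
  push_neg at hcon
  obtain ⟨hnd, hn1, hn2⟩ := hcon
  rw [Set.not_disjoint_iff] at hnd
  obtain ⟨p, hp1, hp2⟩ := hnd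
  rw [Set.Icc_subset_Icc_iff hab'] at hn1
  rw [Set.Icc_subset_Icc_iff hcd'] at hn2
  push_neg at hn1 hn2
  rcases lt_trichotomy a c with hac | hac | hac
  · exact tl_cross hR hab hcd h1 h2 hac (le_trans hp2.1 hp1.2) (hn2 hac.le)
  · exact absurd (hn2 hac.le) (not_lt.mpr (hn1 hac.ge).le)
  · exact tl_cross hR hcd hab h2 h1 hac (le_trans hp1.1 hp2.2) (hn1 hac.le)
end

section
/- Define the projection π : {0,1}^n → ℕ by π(w) = Σ_{i=1}^n w_i · 3^{n-i}. For every set of the form S = {w ∈ {0,1}^{2d} : w_{2i-1} ≠ w_{2i} for all i = 1,…,d} embedded into {0,1}^n via a canonical 2d-parameter word p (i.e., taking {π(p⟦w⟧) : w ∈ S}), the image π(p⟦S⟧) is a proper affine d-cube in ℕ. In particular, π(S) itself (n = 2d, p the identity) is a proper affine d-cube. -/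
open scoped symmDiff


/-- The projection `π(w) = Σ_{i=1}^n w_i 3^{n-i}` (0-indexed here). -/
def proj (n : ℕ) (w : Fin n → Fin 2) : ℕ :=
  ∑ i : Fin n, (w i : ℕ) * 3 ^ (n - 1 - (i : ℕ))

lemma gsum3 (k : ℕ) : ∑ e ∈ Finset.range k, 3^e < 3^k := by
  induction k with
  | zero => simp
  | succ k ih => rw [Finset.sum_range_succ, pow_succ]; omega

lemma expbound {n : ℕ} (S : Finset (Fin n)) (m : Fin n) (h : ∀ i ∈ S, m < i) :
    ∑ i ∈ S, 3 ^ (n - 1 - (i : ℕ)) < 3 ^ (n - 1 - (m : ℕ)) := by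
  have hinj : ∀ i ∈ S, ∀ i' ∈ S, n - 1 - (i : ℕ) = n - 1 - (i' : ℕ) → i = i' := by
    intro i _ i' _ he
    have h1 := i.isLt; have h2 := i'.isLt
    exact Fin.ext (by omega)
  have himg : ∑ i ∈ S, 3 ^ (n - 1 - (i : ℕ)) = ∑ e ∈ S.image (fun i : Fin n => n - 1 - (i : ℕ)), 3^e :=
    (Finset.sum_image hinj).symm
  rw [himg]
  calc ∑ e ∈ S.image (fun i : Fin n => n - 1 - (i : ℕ)), 3^e
      ≤ ∑ e ∈ Finset.range (n - 1 - (m : ℕ)), 3^e := by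
        apply Finset.sum_le_sum_of_subset
        intro e he
        simp only [Finset.mem_image] at he
        obtain ⟨i, hiS, rfl⟩ := he
        have := h i hiS
        have h1 := i.isLt
        simp only [Finset.mem_range]
        have : (m : ℕ) < (i : ℕ) := this
        omega
    _ < _ := gsum3 _

lemma range_two_mul_sum (F : ℕ → ℕ) (k : ℕ) :
    ∑ m ∈ Finset.range (2*k), F m = ∑ i ∈ Finset.range k, (F (2*i) + F (2*i+1)) := by
  induction k with
  | zero => simp
  | succ k ih =>
    rw [show 2*(k+1) = 2*k+1+1 by ring, Finset.sum_range_succ, Finset.sum_range_succ,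
      Finset.sum_range_succ, ih]
    omega

lemma idx0_lt {d : ℕ} (i : Fin d) : 2*(i:ℕ) < 2*d := by have := i.isLt; omega
lemma idx1_lt {d : ℕ} (i : Fin d) : 2*(i:ℕ)+1 < 2*d := by have := i.isLt; omega
def idx0 {d : ℕ} (i : Fin d) : Fin (2*d) := ⟨2*(i:ℕ), idx0_lt i⟩
def idx1 {d : ℕ} (i : Fin d) : Fin (2*d) := ⟨2*(i:ℕ)+1, idx1_lt i⟩

lemma pair_sum {d : ℕ} (g : Fin (2*d) → ℕ) :
    ∑ j, g j = ∑ i : Fin d, (g (idx0 i) + g (idx1 i)) := by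
  set G : ℕ → ℕ := fun m => if h : m < 2*d then g ⟨m, h⟩ else 0 with hG
  have h1 : ∑ j, g j = ∑ m ∈ Finset.range (2*d), G m := by
    rw [← Fin.sum_univ_eq_sum_range]
    apply Finset.sum_congr rfl
    intro j _
    simp [hG, j.isLt]
  rw [h1, range_two_mul_sum, ← Fin.sum_univ_eq_sum_range (fun i => G (2*i) + G (2*i+1))]
  apply Finset.sum_congr rfl
  intro i _
  have h2 : 2*(i:ℕ) < 2*d := by omega
  have h3 : 2*(i:ℕ)+1 < 2*d := by omega
  show G (2*(i:ℕ)) + G (2*(i:ℕ)+1) = _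
  rw [hG]
  simp only [dif_pos h2, dif_pos h3]
  rfl

def Aw {n d : ℕ} (p : Fin n → Sum (Fin 2) (Fin d)) (j : Fin d) : ℕ :=
  ∑ i : Fin n, if p i = Sum.inr j then 3 ^ (n - 1 - (i : ℕ)) else 0

def Cw {n d : ℕ} (p : Fin n → Sum (Fin 2) (Fin d)) : ℕ :=
  ∑ i : Fin n, (Sum.elim (fun a : Fin 2 => (a : ℕ)) (fun _ => 0) (p i)) * 3 ^ (n - 1 - (i : ℕ))

lemma proj_subst {n d : ℕ} (p : Fin n → Sum (Fin 2) (Fin d)) (w : Fin d → Fin 2) :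
    proj n (subst p w) = Cw p + ∑ j, (w j : ℕ) * Aw p j := by
  have h1 : ∀ j, (w j : ℕ) * Aw p j
      = ∑ i : Fin n, if p i = Sum.inr j then (w j : ℕ) * 3 ^ (n - 1 - (i : ℕ)) else 0 := by
    intro j
    rw [Aw, Finset.mul_sum]
    apply Finset.sum_congr rfl
    intro i _
    split <;> simp
  simp only [h1]
  rw [Finset.sum_comm, Cw, proj, ← Finset.sum_add_distrib]
  apply Finset.sum_congr rfl
  intro i _
  cases hpi : p i with
  | inl a =>
    simp [subst, hpi]
  | inr j0 =>
    simp only [subst, hpi, Sum.elim_inr, zero_mul, zero_add, Sum.inr.injEq]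
    rw [Finset.sum_ite_eq Finset.univ j0 (fun j => (w j : ℕ) * 3 ^ (n - 1 - (i : ℕ)))]
    simp

lemma domA {n d : ℕ} (p : Fin n → Sum (Fin 2) (Fin d)) (hp : IsPWord p) (hpc : Canonical p)
    (j₁ : Fin d) :
    ∑ j ∈ Finset.univ.filter (fun j => j₁ < j), Aw p j < Aw p j₁ := by
  classical
  obtain ⟨i0, hi0⟩ := hp j₁
  set occ : Finset (Fin n) := Finset.univ.filter (fun i => p i = Sum.inr j₁) with hocc
  have hne : occ.Nonempty := ⟨i0, by simp [hocc, hi0]⟩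
  set i₁ := occ.min' hne with hi₁
  have hpi₁ : p i₁ = Sum.inr j₁ := by
    have := occ.min'_mem hne
    simp only [hocc, Finset.mem_filter] at this
    exact this.2
  have hA1 : 3 ^ (n - 1 - (i₁ : ℕ)) ≤ Aw p j₁ := by
    have := Finset.single_le_sum
      (f := fun i : Fin n => if p i = Sum.inr j₁ then 3 ^ (n - 1 - (i : ℕ)) else 0)
      (fun i _ => Nat.zero_le _) (Finset.mem_univ i₁)
    simpa [hpi₁, Aw] using this
  have hterm : ∀ i : Fin n,
      (∑ j ∈ Finset.univ.filter (fun j => j₁ < j), if p i = Sum.inr j then 3 ^ (n - 1 - (i : ℕ)) else 0)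
        ≤ if i₁ < i then 3 ^ (n - 1 - (i : ℕ)) else 0 := by
    intro i
    cases hpi : p i with
    | inl a => simp
    | inr j0 =>
      simp only [Sum.inr.injEq]
      by_cases hj : j₁ < j0
      · have heq : ∀ j ∈ Finset.univ.filter (fun j => j₁ < j),
            (if j0 = j then 3 ^ (n - 1 - (i : ℕ)) else 0)
              = (if j = j0 then (fun _ : Fin d => 3 ^ (n - 1 - (i : ℕ))) j else 0) := by
          intro j _; simp [eq_comm]
        rw [Finset.sum_congr rfl heq, Finset.sum_ite_eq']
        rw [if_pos (by simp [hj])]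
        obtain ⟨i', hi'lt, hi'⟩ := hpc j₁ j0 hj i hpi
        have : i₁ ≤ i' := occ.min'_le i' (by simp [hocc, hi'])
        rw [if_pos (lt_of_le_of_lt this hi'lt)]
      · have : ∀ j ∈ Finset.univ.filter (fun j => j₁ < j),
            (if j0 = j then 3 ^ (n - 1 - (i : ℕ)) else 0) = 0 := by
          intro j hjf
          simp only [Finset.mem_filter] at hjf
          rw [if_neg]
          rintro rfl
          exact hj hjf.2
        rw [Finset.sum_congr rfl this]
        simp
  calc ∑ j ∈ Finset.univ.filter (fun j => j₁ < j), Aw p j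
      = ∑ i : Fin n, ∑ j ∈ Finset.univ.filter (fun j => j₁ < j),
          (if p i = Sum.inr j then 3 ^ (n - 1 - (i : ℕ)) else 0) := by
        rw [Finset.sum_comm]; rfl
    _ ≤ ∑ i : Fin n, if i₁ < i then 3 ^ (n - 1 - (i : ℕ)) else 0 :=
        Finset.sum_le_sum (fun i _ => hterm i)
    _ = ∑ i ∈ Finset.univ.filter (fun i => i₁ < i), 3 ^ (n - 1 - (i : ℕ)) :=
        (Finset.sum_filter _ _).symm
    _ < 3 ^ (n - 1 - (i₁ : ℕ)) := expbound _ i₁ (by intro i hi; exact (Finset.mem_filter.mp hi).2)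
    _ ≤ Aw p j₁ := hA1

lemma si_lt {d : ℕ} (x : Fin d → ℕ)
    (hx : ∀ i, (∑ i' ∈ Finset.univ.filter (fun j => i < j), x i') < x i)
    (s t : Finset (Fin d)) (i : Fin d) (his : i ∈ s) (hit : i ∉ t)
    (hagree : ∀ j, j < i → (j ∈ s ↔ j ∈ t)) :
    ∑ j ∈ t, x j < ∑ j ∈ s, x j := by
  have hts : t.filter (fun j => j < i) = s.filter (fun j => j < i) := by
    ext j
    simp only [Finset.mem_filter]
    constructor
    · rintro ⟨hj, hji⟩; exact ⟨(hagree j hji).2 hj, hji⟩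
    · rintro ⟨hj, hji⟩; exact ⟨(hagree j hji).1 hj, hji⟩
  rw [← Finset.sum_filter_add_sum_filter_not t (fun j => j < i),
      ← Finset.sum_filter_add_sum_filter_not s (fun j => j < i), hts]
  have h2 : ∑ j ∈ t.filter (fun j => ¬ j < i), x j < x i := by
    calc ∑ j ∈ t.filter (fun j => ¬ j < i), x j
        ≤ ∑ j ∈ Finset.univ.filter (fun j => i < j), x j := by
          apply Finset.sum_le_sum_of_subset
          intro j hj
          simp only [Finset.mem_filter] at hj ⊢
          refine ⟨Finset.mem_univ _, ?_⟩
          rcases lt_or_eq_of_le (not_lt.mp hj.2) with h | h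
          · exact h
          · exact absurd (h ▸ hj.1) hit
      _ < x i := hx i
  have h3 : x i ≤ ∑ j ∈ s.filter (fun j => ¬ j < i), x j := by
    apply Finset.single_le_sum (fun j _ => Nat.zero_le (x j))
    simp [his]
  omega

lemma si_inj {d : ℕ} (x : Fin d → ℕ)
    (hx : ∀ i, (∑ i' ∈ Finset.univ.filter (fun j => i < j), x i') < x i) :
    Function.Injective (fun ε : Finset (Fin d) => ∑ i ∈ ε, x i) := by
  intro s t hst
  by_contra hne
  have hsd : (s ∆ t).Nonempty := by
    rw [Finset.nonempty_iff_ne_empty]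
    intro h
    exact hne (Finset.symmDiff_eq_empty.mp h)
  set i := (s ∆ t).min' hsd with hi
  have himem := (s ∆ t).min'_mem hsd
  have hagree : ∀ j, j < i → (j ∈ s ↔ j ∈ t) := by
    intro j hj
    by_contra hc
    have : j ∈ s ∆ t := by
      rw [Finset.mem_symmDiff]
      tauto
    exact absurd (Finset.min'_le _ _ this) (not_le.mpr hj)
  rw [Finset.mem_symmDiff] at himem
  simp only at hst
  rcases himem with ⟨h1, h2⟩ | ⟨h1, h2⟩
  · exact absurd hst (Nat.ne_of_gt (si_lt x hx s t i h1 h2 hagree))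
  · exact absurd hst (Nat.ne_of_lt (si_lt x hx t s i h1 h2 (fun j hj => (hagree j hj).symm)))
lemma fin2 (a : Fin 2) : a = 0 ∨ a = 1 := by omega


/-- The image under `π` of the set `S = {w ∈ {0,1}^{2d} : w_{2i-1} ≠ w_{2i}}`, embedded
into `{0,1}^n` by a canonical `2d`-parameter word `p`, is a proper affine `d`-cube. -/
theorem stmt13 (n d : ℕ)
    (p : Fin n → Sum (Fin 2) (Fin (2 * d))) (hp : IsPWord p) (hpc : Canonical p) :
    ∃ (x₀ : ℕ) (x : Fin d → ℕ),
      (∀ i, 0 < x i) ∧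
      Function.Injective (fun ε : Finset (Fin d) => x₀ + ∑ i ∈ ε, x i) ∧
      {y | ∃ w : Fin (2 * d) → Fin 2,
          (∀ i : Fin d, w ⟨2 * i, by have := i.isLt; omega⟩ ≠
            w ⟨2 * i + 1, by have := i.isLt; omega⟩) ∧
          y = proj n (subst p w)} =
        {y | ∃ ε : Finset (Fin d), y = x₀ + ∑ i ∈ ε, x i} := by
  classical
  have hdom := domA p hp hpc
  -- basic inequality A (idx1 i) < A (idx0 i)
  have hlt : ∀ i : Fin d, Aw p (idx1 i) < Aw p (idx0 i) := by
    intro i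
    have h1 : idx1 i ∈ Finset.univ.filter (fun j => idx0 i < j) := by
      simp [Fin.lt_def, idx0, idx1]
    calc Aw p (idx1 i) ≤ ∑ j ∈ Finset.univ.filter (fun j => idx0 i < j), Aw p j :=
          Finset.single_le_sum (fun j _ => Nat.zero_le _) h1
      _ < Aw p (idx0 i) := hdom _
  -- superincreasing property
  have hx : ∀ i : Fin d,
      (∑ i' ∈ Finset.univ.filter (fun j => i < j), (Aw p (idx0 i') - Aw p (idx1 i')))
        < Aw p (idx0 i) - Aw p (idx1 i) := by
    intro i
    have h1 : ∑ i' ∈ Finset.univ.filter (fun j => i < j), (Aw p (idx0 i') - Aw p (idx1 i'))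
        ≤ ∑ i' ∈ Finset.univ.filter (fun j => i < j), Aw p (idx0 i') :=
      Finset.sum_le_sum (fun i' _ => Nat.sub_le _ _)
    have hinj2 : ∀ a ∈ Finset.univ.filter (fun j => i < j),
        ∀ b ∈ Finset.univ.filter (fun j => i < j), idx0 a = idx0 b → a = b := by
      intro a _ b _ hab
      have : (idx0 a : ℕ) = (idx0 b : ℕ) := congrArg Fin.val hab
      simp only [idx0] at this
      exact Fin.ext (by omega)
    have h2 : ∑ i' ∈ Finset.univ.filter (fun j => i < j), Aw p (idx0 i')
        ≤ ∑ j ∈ (Finset.univ.filter (fun j => idx0 i < j)).erase (idx1 i), Aw p j := by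
      have himg : ∑ i' ∈ Finset.univ.filter (fun j => i < j), Aw p (idx0 i')
          = ∑ j ∈ (Finset.univ.filter (fun j => i < j)).image idx0, Aw p j :=
        (Finset.sum_image hinj2).symm
      rw [himg]
      apply Finset.sum_le_sum_of_subset
      intro j hj
      simp only [Finset.mem_image, Finset.mem_filter, Finset.mem_univ, true_and] at hj
      obtain ⟨i', hi', rfl⟩ := hj
      rw [Finset.mem_erase, Finset.mem_filter]
      have hi'2 : (i : ℕ) < (i' : ℕ) := hi'
      refine ⟨?_, Finset.mem_univ _, ?_⟩
      · intro hc
        have := congrArg Fin.val hc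
        simp only [idx0, idx1] at this
        omega
      · show (idx0 i : ℕ) < (idx0 i' : ℕ)
        simp only [idx0]
        omega
    have h3 : Aw p (idx1 i) + ∑ j ∈ (Finset.univ.filter (fun j => idx0 i < j)).erase (idx1 i), Aw p j
        = ∑ j ∈ Finset.univ.filter (fun j => idx0 i < j), Aw p j := by
      apply Finset.add_sum_erase
      simp [Fin.lt_def, idx0, idx1]
    have h4 := hdom (idx0 i)
    have h5 := hlt i
    omega
  refine ⟨Cw p + ∑ i : Fin d, Aw p (idx1 i), fun i => Aw p (idx0 i) - Aw p (idx1 i),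
    fun i => Nat.sub_pos_of_lt (hlt i), ?_, ?_⟩
  · -- injectivity
    intro s t hst
    simp only at hst
    exact si_inj _ hx (Nat.add_left_cancel hst)
  · -- set equality
    have key : ∀ w : Fin (2*d) → Fin 2, (∀ i : Fin d, w (idx0 i) ≠ w (idx1 i)) →
        proj n (subst p w) = (Cw p + ∑ i : Fin d, Aw p (idx1 i)) +
          ∑ i ∈ Finset.univ.filter (fun i => w (idx0 i) = 1),
            (Aw p (idx0 i) - Aw p (idx1 i)) := by
      intro w hw
      rw [proj_subst, pair_sum (fun j => (w j : ℕ) * Aw p j)]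
      have hper : ∀ i : Fin d,
          ((w (idx0 i) : ℕ) * Aw p (idx0 i) + (w (idx1 i) : ℕ) * Aw p (idx1 i))
            = Aw p (idx1 i) + (if w (idx0 i) = 1 then Aw p (idx0 i) - Aw p (idx1 i) else 0) := by
        intro i
        rcases fin2 (w (idx0 i)) with h0 | h0
        · have h1 : w (idx1 i) = 1 := by
            rcases fin2 (w (idx1 i)) with h | h
            · exact absurd (h0.trans h.symm) (hw i)
            · exact h
          rw [h0, h1, if_neg (by decide)]
          simp
        · have h1 : w (idx1 i) = 0 := by
            rcases fin2 (w (idx1 i)) with h | h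
            · exact h
            · exact absurd (h0.trans h.symm) (hw i)
          rw [h0, h1, if_pos rfl]
          have := hlt i
          simp only [Fin.val_one, one_mul, Fin.val_zero, zero_mul, add_zero]
          omega
      have hsum : ∑ i : Fin d,
          ((w (idx0 i) : ℕ) * Aw p (idx0 i) + (w (idx1 i) : ℕ) * Aw p (idx1 i))
          = ∑ i : Fin d, (Aw p (idx1 i) +
              (if w (idx0 i) = 1 then Aw p (idx0 i) - Aw p (idx1 i) else 0)) :=
        Finset.sum_congr rfl (fun i _ => hper i)
      rw [hsum, Finset.sum_add_distrib, Finset.sum_filter]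
      omega
    ext y
    simp only [Set.mem_setOf_eq]
    constructor
    · rintro ⟨w, hw, rfl⟩
      exact ⟨Finset.univ.filter (fun i => w (idx0 i) = 1), key w (fun i => hw i)⟩
    · rintro ⟨ε, rfl⟩
      set w : Fin (2*d) → Fin 2 := fun j =>
        if (j : ℕ) % 2 = 0 then
          (if (⟨(j : ℕ) / 2, by have := j.isLt; omega⟩ : Fin d) ∈ ε then 1 else 0)
        else
          (if (⟨(j : ℕ) / 2, by have := j.isLt; omega⟩ : Fin d) ∈ ε then 0 else 1) with hwdef
      have hw0 : ∀ i : Fin d, w (idx0 i) = (if i ∈ ε then 1 else 0) := by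
        intro i
        have hv : (idx0 i : ℕ) = 2*(i:ℕ) := rfl
        have hmk : ∀ (h : (idx0 i : ℕ)/2 < d), (⟨(idx0 i : ℕ)/2, h⟩ : Fin d) = i := by
          intro h
          apply Fin.ext
          show (idx0 i : ℕ)/2 = (i:ℕ)
          rw [hv]; omega
        simp only [hwdef]
        rw [if_pos (show (idx0 i : ℕ) % 2 = 0 by rw [hv]; omega), hmk]
      have hw1 : ∀ i : Fin d, w (idx1 i) = (if i ∈ ε then 0 else 1) := by
        intro i
        have hv : (idx1 i : ℕ) = 2*(i:ℕ)+1 := rfl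
        have hmk : ∀ (h : (idx1 i : ℕ)/2 < d), (⟨(idx1 i : ℕ)/2, h⟩ : Fin d) = i := by
          intro h
          apply Fin.ext
          show (idx1 i : ℕ)/2 = (i:ℕ)
          rw [hv]; omega
        simp only [hwdef]
        rw [if_neg (show ¬ (idx1 i : ℕ) % 2 = 0 by rw [hv]; omega), hmk]
      have hcon : ∀ i : Fin d, w (idx0 i) ≠ w (idx1 i) := by
        intro i
        rw [hw0, hw1]
        by_cases h : i ∈ ε <;> simp [h]
      have hfil : Finset.univ.filter (fun i => w (idx0 i) = 1) = ε := by
        ext i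
        simp only [Finset.mem_filter, Finset.mem_univ, true_and, hw0 i]
        by_cases h : i ∈ ε <;> simp [h]
      refine ⟨w, fun i => hcon i, ?_⟩
      rw [key w hcon, hfil]
end

section
/- Let T be a weakly decreasing Schröder tree with k leaves labeled by [k] in left-to-right order, and fix a linear ordering < on [k] compatible with the leaf order. Define an ordering ≺_T on [k]^n as follows: for distinct words w, w', among all indices i with w_i ≠ w'_i, pick the smallest i such that [w_j, w'_j]_T ⪯_T [w_i, w'_i]_T for all j with w_j ≠ w'_j, and declare w ≺_T w' iff w_i < w'_i. Then ≺_T is a linear (strict total) order on [k]^n. -/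
/-- The ordering `≺_T` on `[k]^n` induced by a weakly decreasing Schröder tree `T` (with
the natural order on the leaf labels): among the indices `i` where `w` and `w'` differ,
take the smallest one whose LCA `[w i, w' i]_T` is `⪯_T`-maximum, and compare there. -/
def TreeOrd {k : ℕ} (T : WDSchroeder k) {n : ℕ} (w w' : Fin n → Fin k) : Prop :=
  ∃ (i : Fin n) (X : Fin k × Fin k),
    IsLCA T (w i) (w' i) X ∧ w i < w' i ∧
    (∀ j : Fin n, w j ≠ w' j → ∃ Y, IsLCA T (w j) (w' j) Y ∧ T.pre Y X) ∧
    (∀ j : Fin n, j < i → w j ≠ w' j →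
      ∃ Y, IsLCA T (w j) (w' j) Y ∧ ¬ T.pre X Y)

section Helpers

variable {k : ℕ} (T : WDSchroeder k)

lemma pre_refl' {X : Fin k × Fin k} (hX : X ∈ T.nodes) : T.pre X X :=
  (T.pre_total X hX X hX).elim id id

lemma lca_symm {a b : Fin k} {X : Fin k × Fin k} (h : IsLCA T a b X) : IsLCA T b a X :=
  ⟨h.1, h.2.2.2.1, h.2.2.2.2.1, h.2.1, h.2.2.1,
    fun Y hY h1 h2 h3 h4 => h.2.2.2.2.2 Y hY h3 h4 h1 h2⟩

lemma lca_uniq {a b : Fin k} {X Y : Fin k × Fin k}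
    (hX : IsLCA T a b X) (hY : IsLCA T a b Y) : X = Y := by
  obtain ⟨h1, h2⟩ := hX.2.2.2.2.2 Y hY.1 hY.2.1 hY.2.2.1 hY.2.2.2.1 hY.2.2.2.2.1
  obtain ⟨h3, h4⟩ := hY.2.2.2.2.2 X hX.1 hX.2.1 hX.2.2.1 hX.2.2.2.1 hX.2.2.2.2.1
  exact Prod.ext (le_antisymm h3 h1) (le_antisymm h2 h4)

lemma endpoints_of_subset {X Y : Fin k × Fin k} (hX : X.1 ≤ X.2)
    (h : Set.Icc X.1 X.2 ⊆ Set.Icc Y.1 Y.2) : Y.1 ≤ X.1 ∧ X.2 ≤ Y.2 := by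
  have h1 := h (Set.mem_Icc.mpr ⟨le_refl _, hX⟩)
  have h2 := h (Set.mem_Icc.mpr ⟨hX, le_refl _⟩)
  rw [Set.mem_Icc] at h1 h2
  exact ⟨h1.1, h2.2⟩

lemma subset_pre {X Y : Fin k × Fin k} (hX : X ∈ T.nodes) (hY : Y ∈ T.nodes)
    (h : Set.Icc X.1 X.2 ⊆ Set.Icc Y.1 Y.2) : T.pre X Y := by
  rcases h.ssubset_or_eq with h | h
  · exact (T.decreasing X hX Y hY h).1
  · have e1 := endpoints_of_subset (T.nontriv X hX).le h.subset
    have e2 := endpoints_of_subset (T.nontriv Y hY).le h.symm.subset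
    have hXY : X = Y := Prod.ext (le_antisymm e2.1 e1.1) (le_antisymm e1.2 e2.2)
    rw [hXY]; exact pre_refl' T hY

lemma lca_tri {a b c : Fin k} {A B : Fin k × Fin k}
    (hA : IsLCA T a b A) (hB : IsLCA T b c B) :
    Set.Icc A.1 A.2 ⊂ Set.Icc B.1 B.2 ∨ A = B ∨ Set.Icc B.1 B.2 ⊂ Set.Icc A.1 A.2 := by
  have hbA : b ∈ Set.Icc A.1 A.2 := Set.mem_Icc.mpr ⟨hA.2.2.2.1, hA.2.2.2.2.1⟩
  have hbB : b ∈ Set.Icc B.1 B.2 := Set.mem_Icc.mpr ⟨hB.2.1, hB.2.2.1⟩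
  rcases T.laminar A hA.1 B hB.1 with h | h | h
  · rcases h.ssubset_or_eq with h | h
    · exact Or.inl h
    · refine Or.inr (Or.inl ?_)
      have e1 := endpoints_of_subset (T.nontriv A hA.1).le h.subset
      have e2 := endpoints_of_subset (T.nontriv B hB.1).le h.symm.subset
      exact Prod.ext (le_antisymm e2.1 e1.1) (le_antisymm e1.2 e2.2)
  · rcases h.ssubset_or_eq with h | h
    · exact Or.inr (Or.inr h)
    · refine Or.inr (Or.inl ?_)
      have e1 := endpoints_of_subset (T.nontriv B hB.1).le h.subset
      have e2 := endpoints_of_subset (T.nontriv A hA.1).le h.symm.subset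
      exact Prod.ext (le_antisymm e1.1 e2.1) (le_antisymm e2.2 e1.2)
  · exact absurd hbB (Set.disjoint_left.mp h hbA)

lemma lca_exists {a b : Fin k} (hab : a ≠ b) : ∃ X, IsLCA T a b X := by
  classical
  have hk : 2 ≤ k := by
    have h1 := a.isLt; have h2 := b.isLt
    have h3 : a.val ≠ b.val := fun h => hab (Fin.ext h)
    omega
  obtain ⟨R, hR, hRall⟩ := T.root hk
  set S := T.nodes.filter (fun X => X.1 ≤ a ∧ a ≤ X.2 ∧ X.1 ≤ b ∧ b ≤ X.2) with hS
  have hRS : R ∈ S := Finset.mem_filter.mpr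
    ⟨hR, (hRall a).1, (hRall a).2, (hRall b).1, (hRall b).2⟩
  obtain ⟨X, hXS, hXmin⟩ := S.exists_min_image (fun X => X.2.val - X.1.val) ⟨R, hRS⟩
  obtain ⟨hXn, hX1a, hXa2, hX1b, hXb2⟩ := Finset.mem_filter.mp hXS
  refine ⟨X, hXn, hX1a, hXa2, hX1b, hXb2, ?_⟩
  intro Y hYn hY1a hYa2 hY1b hYb2
  have hYS : Y ∈ S := Finset.mem_filter.mpr ⟨hYn, hY1a, hYa2, hY1b, hYb2⟩
  have hmin : X.2.val - X.1.val ≤ Y.2.val - Y.1.val := hXmin Y hYS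
  rcases T.laminar X hXn Y hYn with h | h | h
  · exact endpoints_of_subset (T.nontriv X hXn).le h
  · have e := endpoints_of_subset (T.nontriv Y hYn).le h
    have v1 := Fin.le_def.mp e.1
    have v2 := Fin.le_def.mp e.2
    have v3 := Fin.lt_def.mp (T.nontriv X hXn)
    have v4 := Fin.lt_def.mp (T.nontriv Y hYn)
    exact ⟨Fin.le_def.mpr (by omega), Fin.le_def.mpr (by omega)⟩
  · exact absurd (Set.mem_Icc.mpr ⟨hY1a, hYa2⟩)
      (Set.disjoint_left.mp h (Set.mem_Icc.mpr ⟨hX1a, hXa2⟩))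

lemma lca_chain {a b c : Fin k} {A B : Fin k × Fin k}
    (hA : IsLCA T a b A) (hB : IsLCA T b c B)
    (h : Set.Icc A.1 A.2 ⊂ Set.Icc B.1 B.2) :
    IsLCA T a c B ∧ ¬(A.1 ≤ c ∧ c ≤ A.2) := by
  have hcA : ¬(A.1 ≤ c ∧ c ≤ A.2) := by
    rintro ⟨h1, h2⟩
    have hm := hB.2.2.2.2.2 A hA.1 hA.2.2.2.1 hA.2.2.2.2.1 h1 h2
    exact h.not_subset (Set.Icc_subset_Icc hm.1 hm.2)
  have haB : a ∈ Set.Icc B.1 B.2 := h.subset (Set.mem_Icc.mpr ⟨hA.2.1, hA.2.2.1⟩)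
  rw [Set.mem_Icc] at haB
  refine ⟨⟨hB.1, haB.1, haB.2, hB.2.2.2.1, hB.2.2.2.2.1, ?_⟩, hcA⟩
  intro N hN h1 h2 h3 h4
  rcases T.laminar A hA.1 N hN with hs | hs | hs
  · have hbN := hs (Set.mem_Icc.mpr ⟨hA.2.2.2.1, hA.2.2.2.2.1⟩)
    rw [Set.mem_Icc] at hbN
    exact hB.2.2.2.2.2 N hN hbN.1 hbN.2 h3 h4
  · have hcN := hs (Set.mem_Icc.mpr ⟨h3, h4⟩)
    rw [Set.mem_Icc] at hcN
    exact absurd hcN hcA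
  · exact absurd (Set.mem_Icc.mpr ⟨h1, h2⟩)
      (Set.disjoint_left.mp hs (Set.mem_Icc.mpr ⟨hA.2.1, hA.2.2.1⟩))

lemma lca_ssub {a b c : Fin k} {A B : Fin k × Fin k}
    (hA : IsLCA T a b A) (hB : IsLCA T b c B) (hn : ¬ T.pre B A) :
    Set.Icc A.1 A.2 ⊂ Set.Icc B.1 B.2 := by
  rcases lca_tri T hA hB with h | h | h
  · exact h
  · cases h
    exact absurd (pre_refl' T hA.1) hn
  · exact absurd (subset_pre T hB.1 hA.1 h.subset) hn

lemma lca_third {a b c : Fin k} {A B C : Fin k × Fin k}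
    (hA : IsLCA T a b A) (hB : IsLCA T b c B) (hC : IsLCA T a c C) :
    T.pre C A ∨ T.pre C B := by
  rcases lca_tri T hA hB with h | h | h
  · right
    rw [lca_uniq T hC (lca_chain T hA hB h).1]
    exact pre_refl' T hB.1
  · cases h
    left
    have h1 := hC.2.2.2.2.2 A hA.1 hA.2.1 hA.2.2.1 hB.2.2.2.1 hB.2.2.2.2.1
    exact subset_pre T hC.1 hA.1 (Set.Icc_subset_Icc h1.1 h1.2)
  · left
    rw [lca_uniq T hC (lca_symm T (lca_chain T (lca_symm T hB) (lca_symm T hA) h).1)]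
    exact pre_refl' T hA.1

lemma lca_third' {a b c : Fin k} {A B C : Fin k × Fin k} (hab : a < b) (hbc : b < c)
    (hA : IsLCA T a b A) (hB : IsLCA T b c B) (hC : IsLCA T a c C) :
    C = A ∨ C = B := by
  rcases lca_tri T hA hB with h | h | h
  · exact Or.inr (lca_uniq T hC (lca_chain T hA hB h).1)
  · cases h
    left
    have h1 := hC.2.2.2.2.2 A hA.1 hA.2.1 hA.2.2.1 hB.2.2.2.1 hB.2.2.2.2.1
    have hbC1 : C.1 ≤ b := le_trans hC.2.1 hab.le
    have hbC2 : b ≤ C.2 := le_trans hbc.le hC.2.2.2.2.1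
    have h2 := hA.2.2.2.2.2 C hC.1 hC.2.1 hC.2.2.1 hbC1 hbC2
    exact Prod.ext (le_antisymm h2.1 h1.1) (le_antisymm h1.2 h2.2)
  · exact Or.inl (lca_uniq T hC
      (lca_symm T (lca_chain T (lca_symm T hB) (lca_symm T hA) h).1))

lemma exists_pre_max {ι : Type*} [DecidableEq ι] (s : Finset ι) (f : ι → Fin k × Fin k) :
    s.Nonempty → (∀ i ∈ s, f i ∈ T.nodes) → ∃ i0 ∈ s, ∀ j ∈ s, T.pre (f j) (f i0) := by
  induction s using Finset.induction with
  | empty => intro h; simp at h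
  | @insert a t ha ih =>
    intro _ hf
    rcases t.eq_empty_or_nonempty with rfl | ht
    · refine ⟨a, Finset.mem_insert_self _ _, ?_⟩
      intro j hj
      rcases Finset.mem_insert.mp hj with rfl | hj
      · exact pre_refl' T (hf j (Finset.mem_insert_self _ _))
      · simp at hj
    · obtain ⟨i0, hi0, hmax⟩ := ih ht (fun i hi => hf i (Finset.mem_insert_of_mem hi))
      have hfa := hf a (Finset.mem_insert_self _ _)
      have hfi0 := hf i0 (Finset.mem_insert_of_mem hi0)
      rcases T.pre_total (f a) hfa (f i0) hfi0 with h | h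
      · refine ⟨i0, Finset.mem_insert_of_mem hi0, ?_⟩
        intro j hj
        rcases Finset.mem_insert.mp hj with rfl | hj
        · exact h
        · exact hmax j hj
      · refine ⟨a, Finset.mem_insert_self _ _, ?_⟩
        intro j hj
        rcases Finset.mem_insert.mp hj with rfl | hj
        · exact pre_refl' T hfa
        · exact T.pre_trans (f j) (hf j (Finset.mem_insert_of_mem hj)) (f i0) hfi0
            (f a) hfa (hmax j hj) h

lemma lt_of_out {x y z : Fin k} {A : Fin k × Fin k} (h1 : A.1 ≤ x) (h2 : x ≤ A.2)
    (h3 : A.1 ≤ y) (h4 : y ≤ A.2) (h5 : ¬(A.1 ≤ z ∧ z ≤ A.2)) (h6 : y < z) : x < z := by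
  rw [Fin.lt_def] at h6 ⊢
  rw [Fin.le_def] at h1 h2 h3 h4
  have h5' : ¬(A.1.val ≤ z.val ∧ z.val ≤ A.2.val) :=
    fun hh => h5 ⟨Fin.le_def.mpr hh.1, Fin.le_def.mpr hh.2⟩
  omega

lemma lt_of_out' {x y z : Fin k} {A : Fin k × Fin k} (h1 : A.1 ≤ x) (h2 : x ≤ A.2)
    (h3 : A.1 ≤ y) (h4 : y ≤ A.2) (h5 : ¬(A.1 ≤ z ∧ z ≤ A.2)) (h6 : z < y) : z < x := by
  rw [Fin.lt_def] at h6 ⊢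
  rw [Fin.le_def] at h1 h2 h3 h4
  have h5' : ¬(A.1.val ≤ z.val ∧ z.val ≤ A.2.val) :=
    fun hh => h5 ⟨Fin.le_def.mpr hh.1, Fin.le_def.mpr hh.2⟩
  omega

end Helpers

/-- `≺_T` is a strict total order on `[k]^n`. -/
theorem stmt15 (k n : ℕ) (T : WDSchroeder k) :
    IsStrictTotalOrder (Fin n → Fin k) (TreeOrd T) := by
  classical
  have hirr : ∀ w : Fin n → Fin k, ¬ TreeOrd T w w := by
    rintro w ⟨i, X, _, hlt, _, _⟩
    exact lt_irrefl _ hlt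
  have htri : ∀ w w' : Fin n → Fin k, TreeOrd T w w' ∨ w = w' ∨ TreeOrd T w' w := by
    intro w w'
    by_cases hww : w = w'
    · exact Or.inr (Or.inl hww)
    have hD : ∃ j, w j ≠ w' j := by
      by_contra h
      push_neg at h
      exact hww (funext h)
    set D : Finset (Fin n) := Finset.univ.filter (fun j => w j ≠ w' j) with hD'
    have hmemD : ∀ j, j ∈ D ↔ w j ≠ w' j := by intro j; simp [hD']
    have hDne : D.Nonempty := by
      obtain ⟨j, hj⟩ := hD
      exact ⟨j, (hmemD j).mpr hj⟩
    set A : Fin n → Fin k × Fin k :=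
      fun j => if h : w j ≠ w' j then (lca_exists T h).choose else (w j, w j) with hA'
    have hA : ∀ j, w j ≠ w' j → IsLCA T (w j) (w' j) (A j) := by
      intro j h
      simp only [hA', dif_pos h]
      exact (lca_exists T h).choose_spec
    obtain ⟨j0, hj0D, hj0max⟩ := exists_pre_max T D A hDne
      (fun j hj => (hA j ((hmemD j).mp hj)).1)
    set E := D.filter (fun j => T.pre (A j0) (A j)) with hE'
    have hj0E : j0 ∈ E := Finset.mem_filter.mpr
      ⟨hj0D, pre_refl' T (hA j0 ((hmemD j0).mp hj0D)).1⟩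
    set i := E.min' ⟨j0, hj0E⟩ with hi'
    have hiE : i ∈ E := E.min'_mem _
    obtain ⟨hiD, hpre0i⟩ := Finset.mem_filter.mp hiE
    have hiD' : w i ≠ w' i := (hmemD i).mp hiD
    have hmaxi : ∀ j, w j ≠ w' j → T.pre (A j) (A i) := by
      intro j hj
      exact T.pre_trans (A j) (hA j hj).1 (A j0) (hA j0 ((hmemD j0).mp hj0D)).1
        (A i) (hA i hiD').1 (hj0max j ((hmemD j).mpr hj)) hpre0i
    have hmini : ∀ j, j < i → w j ≠ w' j → ¬ T.pre (A i) (A j) := by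
      intro j hjlt hj hcon
      have hjE : j ∈ E := Finset.mem_filter.mpr ⟨(hmemD j).mpr hj,
        T.pre_trans (A j0) (hA j0 ((hmemD j0).mp hj0D)).1 (A i) (hA i hiD').1
          (A j) (hA j hj).1 hpre0i hcon⟩
      exact absurd (E.min'_le j hjE) (not_le.mpr hjlt)
    rcases lt_or_gt_of_ne hiD' with h | h
    · exact Or.inl ⟨i, A i, hA i hiD', h,
        fun j hj => ⟨A j, hA j hj, hmaxi j hj⟩,
        fun j hjlt hj => ⟨A j, hA j hj, hmini j hjlt hj⟩⟩
    · exact Or.inr (Or.inr ⟨i, A i, lca_symm T (hA i hiD'), h,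
        fun j hj => ⟨A j, lca_symm T (hA j hj.symm), hmaxi j hj.symm⟩,
        fun j hjlt hj => ⟨A j, lca_symm T (hA j hj.symm), hmini j hjlt hj.symm⟩⟩)
  have htrans : ∀ w w' w'' : Fin n → Fin k, TreeOrd T w w' → TreeOrd T w' w'' → TreeOrd T w w'' := by
    intro w w' w'' h1 h2
    obtain ⟨i, X, hX, hlt1, hmax1, hmin1⟩ := h1
    obtain ⟨i', Y, hY, hlt2, hmax2, hmin2⟩ := h2
    have hXm : X ∈ T.nodes := hX.1
    have hYm : Y ∈ T.nodes := hY.1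
    have hmin1' : ∀ j, j < i → w j ≠ w' j → ∀ A, IsLCA T (w j) (w' j) A → ¬ T.pre X A := by
      intro j hj hne A hA'
      obtain ⟨A'', hA'', hnp⟩ := hmin1 j hj hne
      rwa [lca_uniq T hA' hA'']
    have hmin2' : ∀ j, j < i' → w' j ≠ w'' j → ∀ B, IsLCA T (w' j) (w'' j) B → ¬ T.pre Y B := by
      intro j hj hne B hB'
      obtain ⟨B'', hB'', hnp⟩ := hmin2 j hj hne
      rwa [lca_uniq T hB' hB'']
    have hmax1' : ∀ j, w j ≠ w' j → ∀ A, IsLCA T (w j) (w' j) A → T.pre A X := by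
      intro j hne A hA'
      obtain ⟨A'', hA'', hp⟩ := hmax1 j hne
      rwa [lca_uniq T hA' hA'']
    have hmax2' : ∀ j, w' j ≠ w'' j → ∀ B, IsLCA T (w' j) (w'' j) B → T.pre B Y := by
      intro j hne B hB'
      obtain ⟨B'', hB'', hp⟩ := hmax2 j hne
      rwa [lca_uniq T hB' hB'']
    have key3 : ∀ Z, Z ∈ T.nodes → T.pre X Z → T.pre Y Z →
        ∀ j, w j ≠ w'' j → ∃ C, IsLCA T (w j) (w'' j) C ∧ T.pre C Z := by
      intro Z hZm hXZ hYZ j hj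
      by_cases e1 : w j = w' j
      · have hj2 : w' j ≠ w'' j := fun h => hj (e1.trans h)
        obtain ⟨B, hB, hpB⟩ := hmax2 j hj2
        refine ⟨B, ?_, T.pre_trans B hB.1 Y hYm Z hZm hpB hYZ⟩
        rw [e1]; exact hB
      · by_cases e2 : w' j = w'' j
        · obtain ⟨Aj, hAj, hpA⟩ := hmax1 j e1
          refine ⟨Aj, ?_, T.pre_trans Aj hAj.1 X hXm Z hZm hpA hXZ⟩
          rw [← e2]; exact hAj
        · obtain ⟨Aj, hAj, hpA⟩ := hmax1 j e1
          obtain ⟨Bj, hBj, hpB⟩ := hmax2 j e2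
          obtain ⟨C, hC⟩ := lca_exists T hj
          refine ⟨C, hC, ?_⟩
          rcases lca_third T hAj hBj hC with h | h
          · exact T.pre_trans C hC.1 X hXm Z hZm
              (T.pre_trans C hC.1 Aj hAj.1 X hXm h hpA) hXZ
          · exact T.pre_trans C hC.1 Y hYm Z hZm
              (T.pre_trans C hC.1 Bj hBj.1 Y hYm h hpB) hYZ
    have key4 : ∀ (Z : Fin k × Fin k) (i0 : Fin n), Z ∈ T.nodes →
        (∀ j, j < i0 → w j ≠ w' j → ∀ A, IsLCA T (w j) (w' j) A → ¬ T.pre Z A) →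
        (∀ j, j < i0 → w' j ≠ w'' j → ∀ B, IsLCA T (w' j) (w'' j) B → ¬ T.pre Z B) →
        ∀ j, j < i0 → w j ≠ w'' j → ∃ C, IsLCA T (w j) (w'' j) C ∧ ¬ T.pre Z C := by
      intro Z i0 hZm hnA hnB j hjlt hj
      by_cases e1 : w j = w' j
      · have hj2 : w' j ≠ w'' j := fun h => hj (e1.trans h)
        obtain ⟨B, hB, _⟩ := hmax2 j hj2
        refine ⟨B, ?_, hnB j hjlt hj2 B hB⟩
        rw [e1]; exact hB
      · by_cases e2 : w' j = w'' j
        · obtain ⟨Aj, hAj, _⟩ := hmax1 j e1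
          refine ⟨Aj, ?_, hnA j hjlt e1 Aj hAj⟩
          rw [← e2]; exact hAj
        · obtain ⟨Aj, hAj, _⟩ := hmax1 j e1
          obtain ⟨Bj, hBj, _⟩ := hmax2 j e2
          obtain ⟨C, hC⟩ := lca_exists T hj
          refine ⟨C, hC, fun hcon => ?_⟩
          rcases lca_third T hAj hBj hC with h | h
          · exact hnA j hjlt e1 Aj hAj (T.pre_trans Z hZm C hC.1 Aj hAj.1 hcon h)
          · exact hnB j hjlt e2 Bj hBj (T.pre_trans Z hZm C hC.1 Bj hBj.1 hcon h)
    have coordA : (w i' ≠ w' i' → ∀ A, IsLCA T (w i') (w' i') A → ¬ T.pre Y A) →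
        IsLCA T (w i') (w'' i') Y ∧ w i' < w'' i' := by
      intro hn
      by_cases e : w i' = w' i'
      · constructor
        · rw [e]; exact hY
        · rw [e]; exact hlt2
      · obtain ⟨Aj, hAj, _⟩ := hmax1 i' e
        have hss := lca_ssub T hAj hY (hn e Aj hAj)
        obtain ⟨hL, hout⟩ := lca_chain T hAj hY hss
        exact ⟨hL, lt_of_out hAj.2.1 hAj.2.2.1 hAj.2.2.2.1 hAj.2.2.2.2.1 hout hlt2⟩
    have coordB : (w' i ≠ w'' i → ∀ B, IsLCA T (w' i) (w'' i) B → ¬ T.pre X B) →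
        IsLCA T (w i) (w'' i) X ∧ w i < w'' i := by
      intro hn
      by_cases e : w' i = w'' i
      · constructor
        · rw [← e]; exact hX
        · rw [← e]; exact hlt1
      · obtain ⟨Bj, hBj, _⟩ := hmax2 i e
        have hss := lca_ssub T (lca_symm T hBj) (lca_symm T hX) (hn e Bj hBj)
        obtain ⟨hL, hout⟩ := lca_chain T (lca_symm T hBj) (lca_symm T hX) hss
        exact ⟨lca_symm T hL,
          lt_of_out' hBj.2.2.2.1 hBj.2.2.2.2.1 hBj.2.1 hBj.2.2.1 hout hlt1⟩
    by_cases hXY : T.pre X Y <;> by_cases hYX : T.pre Y X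
    · -- X ~ Y
      rcases lt_trichotomy i i' with hii | hii | hii
      · -- i < i' : witness (i, X)
        obtain ⟨hL, hlt⟩ := coordB (fun e B hB hcon =>
          hmin2' i hii e B hB (T.pre_trans Y hYm X hXm B hB.1 hYX hcon))
        refine ⟨i, X, hL, hlt, key3 X hXm (pre_refl' T hXm) hYX, key4 X i hXm ?_ ?_⟩
        · exact fun j hj hne A hA' => hmin1' j hj hne A hA'
        · exact fun j hjlt hne B hB hcon =>
            hmin2' j (lt_trans hjlt hii) hne B hB
              (T.pre_trans Y hYm X hXm B hB.1 hYX hcon)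
      · -- i = i'
        subst hii
        have hac : w i < w'' i := lt_trans hlt1 hlt2
        obtain ⟨C, hC⟩ := lca_exists T (ne_of_lt hac)
        have hCXY := lca_third' T hlt1 hlt2 hX hY hC
        have hpXC : T.pre X C ∧ T.pre Y C := by
          rcases hCXY with rfl | rfl
          · exact ⟨pre_refl' T hXm, hYX⟩
          · exact ⟨hXY, pre_refl' T hYm⟩
        refine ⟨i, C, hC, hac, key3 C hC.1 hpXC.1 hpXC.2, key4 C i hC.1 ?_ ?_⟩
        · exact fun j hj hne A hA' hcon =>
            hmin1' j hj hne A hA' (T.pre_trans X hXm C hC.1 A hA'.1 hpXC.1 hcon)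
        · exact fun j hj hne B hB hcon =>
            hmin2' j hj hne B hB (T.pre_trans Y hYm C hC.1 B hB.1 hpXC.2 hcon)
      · -- i' < i : witness (i', Y)
        obtain ⟨hL, hlt⟩ := coordA (fun e A hA' hcon =>
          hmin1' i' hii e A hA' (T.pre_trans X hXm Y hYm A hA'.1 hXY hcon))
        refine ⟨i', Y, hL, hlt, key3 Y hYm hXY (pre_refl' T hYm), key4 Y i' hYm ?_ ?_⟩
        · exact fun j hjlt hne A hA' hcon =>
            hmin1' j (lt_trans hjlt hii) hne A hA'
              (T.pre_trans X hXm Y hYm A hA'.1 hXY hcon)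
        · exact fun j hjlt hne B hB => hmin2' j hjlt hne B hB
    · -- pre X Y, ¬ pre Y X : witness (i', Y)
      obtain ⟨hL, hlt⟩ := coordA (fun e A hA' hcon =>
        hYX (T.pre_trans Y hYm A hA'.1 X hXm hcon (hmax1' i' e A hA')))
      refine ⟨i', Y, hL, hlt, key3 Y hYm hXY (pre_refl' T hYm), key4 Y i' hYm ?_ ?_⟩
      · exact fun j hjlt hne A hA' hcon =>
          hYX (T.pre_trans Y hYm A hA'.1 X hXm hcon (hmax1' j hne A hA'))
      · exact fun j hjlt hne B hB => hmin2' j hjlt hne B hB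
    · -- ¬ pre X Y, pre Y X : witness (i, X)
      obtain ⟨hL, hlt⟩ := coordB (fun e B hB hcon =>
        hXY (T.pre_trans X hXm B hB.1 Y hYm hcon (hmax2' i e B hB)))
      refine ⟨i, X, hL, hlt, key3 X hXm (pre_refl' T hXm) hYX, key4 X i hXm ?_ ?_⟩
      · exact fun j hj hne A hA' => hmin1' j hj hne A hA'
      · exact fun j hjlt hne B hB hcon =>
          hXY (T.pre_trans X hXm B hB.1 Y hYm hcon (hmax2' j hne B hB))
    · exact absurd (T.pre_total X hXm Y hYm) (by simp [hXY, hYX])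
  exact { trichotomous := fun a b h1 h2 => (htri a b).elim (fun h => absurd h h1) (fun h => h.elim id (fun h => absurd h h2)), irrefl := hirr, trans := htrans }
end

section
/- Let < be a linear order on [k] and let p be a canonical d-parameter word of length n. Then for all w, w' ∈ [k]^d, w <_lex w' if and only if p⟦w⟧ <_lex p⟦w'⟧; i.e., the restriction of the lexicographic ordering on [k]^n to a d-subcube, under the canonical bijection, is the lexicographic ordering on [k]^d. -/
/-- The restriction of the lexicographic ordering on `[k]^n` to a `d`-subcube, transported
via the canonical bijection, is the lexicographic ordering on `[k]^d`. -/
theorem stmt19 (k d n : ℕ) (lt : Fin k → Fin k → Prop)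
    (hlt : IsStrictTotalOrder (Fin k) lt)
    (p : Fin n → Sum (Fin k) (Fin d)) (hp : IsPWord p) (hpc : Canonical p)
    (w w' : Fin d → Fin k) :
    LexLT lt w w' ↔ LexLT lt (subst p w) (subst p w') := by
  classical
  haveI := hlt
  constructor
  · rintro ⟨j, hj, heq⟩
    have hne : ∃ m : ℕ, ∃ h : m < n, p ⟨m, h⟩ = Sum.inr j := by
      obtain ⟨i0, hi0⟩ := hp j
      exact ⟨i0.1, i0.2, by simpa using hi0⟩
    obtain ⟨hm, hpm⟩ := Nat.find_spec hne
    refine ⟨⟨Nat.find hne, hm⟩, ?_, ?_⟩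
    · simp [subst, hpm, hj]
    · intro i' hi'
      have hi'lt : i'.1 < Nat.find hne := hi'
      cases hpi' : p i' with
      | inl a => simp [subst, hpi']
      | inr j' =>
        have hj'lt : j' < j := by
          rcases lt_trichotomy j' j with h | h | h
          · exact h
          · exact absurd ⟨i'.2, by simpa [h] using hpi'⟩ (Nat.find_min hne hi'lt)
          · obtain ⟨i₁, hi₁lt, hi₁⟩ := hpc j j' h i' hpi'
            exact absurd ⟨i₁.2, by simpa using hi₁⟩
              (Nat.find_min hne (lt_trans hi₁lt hi'lt))
        simp [subst, hpi', heq j' hj'lt]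
  · rintro ⟨i, hi, heq⟩
    cases hpi : p i with
    | inl a =>
      simp [subst, hpi] at hi
      exact absurd hi (irrefl a)
    | inr j =>
      refine ⟨j, by simpa [subst, hpi] using hi, ?_⟩
      intro j' hj'
      obtain ⟨i₁, hi₁lt, hi₁⟩ := hpc j' j hj' i hpi
      simpa [subst, hi₁] using heq i₁ hi₁lt
end
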